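/- arXiv:1804.01597 — 7 statements merged into one kernel-verified Lean document; each statement's English description precedes it below -/
import Mathlib

section
/- For all integers n ≥ 0 and 0 ≤ k ≤ n, the entry of Borel's triangle satisfies B_{n,k} = (1/(n+1)) · binom(2n+2, n−k) · binom(n+k, n); equivalently, Σ_{s=k}^{n} binom(s,k) · ((n−s+1)/(n+1)) · binom(n+s, n) = (1/(n+1)) · binom(2n+2, n−k) · binom(n+k, n). -/
/-- Catalan's triangle: `C_{n,k} = ((n-k+1)/(n+1)) * binom(n+k, n)` (the division is exact). -/
def catalanTriangle (n k : ℕ) : ℕ := (n - k + 1) * (n + k).choose n / (n + 1)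

/-- Borel's triangle: `B_{n,k} = Σ_{s=k}^{n} binom(s,k) * C_{n,s}`. -/
def borelTriangle (n k : ℕ) : ℕ := ∑ s ∈ Finset.Icc k n, s.choose k * catalanTriangle n s

/-- `(s+1-k) * C(s+1,k) = (s+1) * C(s,k)` in `ℕ`. -/
lemma choose_rel1 (s k : ℕ) : (s + 1 - k) * (s + 1).choose k = (s + 1) * s.choose k := by
  have h1 := Nat.choose_succ_right_eq (s + 1) k
  have h2 := Nat.add_one_mul_choose_eq s k
  simp -failIfUnchanged only [Nat.succ_eq_add_one] at h1 h2
  linarith [h1, h2]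

/-- `(s+1) * C(n+s+1,n) = (n+s+1) * C(n+s,n)` in `ℕ`. -/
lemma choose_rel2 (n s : ℕ) : (s + 1) * (n + s + 1).choose n = (n + s + 1) * (n + s).choose n := by
  have h2 := Nat.add_one_mul_choose_eq (n + s) s
  simp -failIfUnchanged only [Nat.succ_eq_add_one] at h2
  have e1 : (n + s).choose s = (n + s).choose n := by
    rw [← Nat.choose_symm (Nat.le_add_right n s)]
    congr 1
    omega
  have e2 : (n + s + 1).choose (s + 1) = (n + s + 1).choose n := by
    rw [← Nat.choose_symm (by omega : s + 1 ≤ n + s + 1)]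
    congr 1
    omega
  rw [e1, e2] at h2
  linarith [h2]

/-- `(n+1) * C(n+s, s-1) = s * C(n+s, n)` for `1 ≤ s`. -/
lemma choose_rel3 (n s : ℕ) (hs : 1 ≤ s) :
    (n + 1) * (n + s).choose (s - 1) = s * (n + s).choose n := by
  have h1 := Nat.choose_succ_right_eq (n + s) (s - 1)
  have hs1 : s - 1 + 1 = s := by omega
  have hs2 : n + s - (s - 1) = n + 1 := by omega
  rw [hs1, hs2] at h1
  have e1 : (n + s).choose s = (n + s).choose n := by
    rw [← Nat.choose_symm (Nat.le_add_right n s)]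
    congr 1
    omega
  rw [e1] at h1
  linarith [h1]

lemma catalan_dvd (n s : ℕ) (hs : s ≤ n) :
    (n + 1) ∣ (n - s + 1) * (n + s).choose n := by
  rcases Nat.eq_zero_or_pos s with rfl | hpos
  · simp
  · have h3 := choose_rel3 n s hpos
    have heq : (n - s + 1) * (n + s).choose n
        = (n + 1) * (n + s).choose n - (n + 1) * (n + s).choose (s - 1) := by
      rw [h3, ← Nat.sub_mul]
      congr 1
      omega
    rw [heq]
    exact Nat.dvd_sub (Dvd.intro _ rfl) (Dvd.intro _ rfl)

/-- Cast of a Catalan triangle entry to `ℚ`. -/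
lemma catalan_cast (n s : ℕ) (hs : s ≤ n) :
    (catalanTriangle n s : ℚ) = ((n - s + 1 : ℕ) : ℚ) * ((n + s).choose n : ℚ) / ((n : ℚ) + 1) := by
  unfold catalanTriangle
  rw [Nat.cast_div (catalan_dvd n s hs) (by positivity)]
  push_cast
  ring

/-- The telescoping function for Gosper's antidifference. -/
noncomputable def gtel (n k : ℕ) (s : ℕ) : ℚ :=
  ((s : ℚ) - k) * (s.choose k : ℚ) * ((n + s).choose n : ℚ) *
    (((n : ℚ) + 1) * ((n : ℚ) + k + 3) - (s : ℚ) * ((n : ℚ) + k + 1))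

lemma gtel_step (n k s : ℕ) (hks : k ≤ s) :
    gtel n k (s + 1) - gtel n k s
      = ((n : ℚ) + k + 1) * ((n : ℚ) + k + 2) *
        ((s.choose k : ℚ) * (((n : ℚ) - s + 1) * ((n + s).choose n : ℚ))) := by
  have h1 : ((s : ℚ) + 1 - k) * ((s + 1).choose k : ℚ) = ((s : ℚ) + 1) * (s.choose k : ℚ) := by
    have h := choose_rel1 s k
    have hc : (((s + 1 - k : ℕ) : ℚ)) = (s : ℚ) + 1 - k := by
      push_cast [Nat.cast_sub (by omega : k ≤ s + 1)]; ring
    calc ((s : ℚ) + 1 - k) * ((s + 1).choose k : ℚ)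
        = (((s + 1 - k : ℕ) : ℚ)) * ((s + 1).choose k : ℚ) := by rw [hc]
      _ = (((s + 1 - k) * (s + 1).choose k : ℕ) : ℚ) := by push_cast; ring
      _ = (((s + 1) * s.choose k : ℕ) : ℚ) := by rw [h]
      _ = ((s : ℚ) + 1) * (s.choose k : ℚ) := by push_cast; ring
  have h2 : ((s : ℚ) + 1) * ((n + s + 1).choose n : ℚ)
      = ((n : ℚ) + s + 1) * ((n + s).choose n : ℚ) := by
    have h := choose_rel2 n s
    calc ((s : ℚ) + 1) * ((n + s + 1).choose n : ℚ)
        = (((s + 1) * (n + s + 1).choose n : ℕ) : ℚ) := by push_cast; ring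
      _ = (((n + s + 1) * (n + s).choose n : ℕ) : ℚ) := by rw [h]
      _ = ((n : ℚ) + s + 1) * ((n + s).choose n : ℚ) := by push_cast; ring
  unfold gtel
  have hns : (n + (s + 1)) = (n + s + 1) := by ring
  rw [hns]
  push_cast
  linear_combination
    (((n + s + 1).choose n : ℚ)) *
        (((n : ℚ) + 1) * ((n : ℚ) + k + 3) - ((s : ℚ) + 1) * ((n : ℚ) + k + 1)) * h1 +
      ((s.choose k : ℚ)) *
        (((n : ℚ) + 1) * ((n : ℚ) + k + 3) - ((s : ℚ) + 1) * ((n : ℚ) + k + 1)) * h2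

/-- The core summation identity over `ℚ`. -/
lemma core_sum (n k : ℕ) (hk : k ≤ n) :
    ∑ s ∈ Finset.Icc k n, (s.choose k : ℚ) * (((n : ℚ) - s + 1) * ((n + s).choose n : ℚ))
      = ((2 * n + 2).choose (n - k) : ℚ) * ((n + k).choose n : ℚ) := by
  have hfac : ((n : ℚ) + k + 1) * ((n : ℚ) + k + 2) ≠ 0 := by positivity
  -- telescoping
  have htel : ((n : ℚ) + k + 1) * ((n : ℚ) + k + 2) *
      (∑ s ∈ Finset.Icc k n, (s.choose k : ℚ) * (((n : ℚ) - s + 1) * ((n + s).choose n : ℚ)))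
      = gtel n k (n + 1) - gtel n k k := by
    rw [Finset.mul_sum, ← Finset.Ico_add_one_right_eq_Icc, Finset.sum_Ico_eq_sum_range]
    have hrw : ∀ i ∈ Finset.range (n + 1 - k),
        ((n : ℚ) + k + 1) * ((n : ℚ) + k + 2) *
          (((k + i).choose k : ℚ) * (((n : ℚ) - ((k + i : ℕ) : ℚ) + 1) *
            ((n + (k + i)).choose n : ℚ)))
          = gtel n k (k + (i + 1)) - gtel n k (k + i) := by
      intro i hi
      have : k + (i + 1) = (k + i) + 1 := by ring
      rw [this, gtel_step n k (k + i) (by omega)]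
    calc ∑ i ∈ Finset.range (n + 1 - k),
          ((n : ℚ) + k + 1) * ((n : ℚ) + k + 2) *
            (((k + i).choose k : ℚ) * (((n : ℚ) - ((k + i : ℕ) : ℚ) + 1) *
              ((n + (k + i)).choose n : ℚ)))
        = ∑ i ∈ Finset.range (n + 1 - k), (gtel n k (k + (i + 1)) - gtel n k (k + i)) :=
          Finset.sum_congr rfl hrw
      _ = gtel n k (k + (n + 1 - k)) - gtel n k (k + 0) :=
          Finset.sum_range_sub (fun i => gtel n k (k + i)) (n + 1 - k)
      _ = gtel n k (n + 1) - gtel n k k := by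
          congr 2
          all_goals omega
  have hg0 : gtel n k k = 0 := by unfold gtel; ring
  have hgtop : gtel n k (n + 1)
      = ((n : ℚ) + 1 - k) * ((n + 1).choose k : ℚ) * ((2 * n + 1).choose n : ℚ) *
          (2 * ((n : ℚ) + 1)) := by
    unfold gtel
    have : (n + (n + 1)) = 2 * n + 1 := by ring
    rw [this]
    push_cast
    ring
  -- the closed-form binomial identity
  have hclosed : ((n : ℚ) + 1 - k) * ((n + 1).choose k : ℚ) * ((2 * n + 1).choose n : ℚ) *
        (2 * ((n : ℚ) + 1))
      = ((n : ℚ) + k + 1) * ((n : ℚ) + k + 2) *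
        (((2 * n + 2).choose (n - k) : ℚ) * ((n + k).choose n : ℚ)) := by
    have c1 : ((n + 1).choose k : ℚ)
        = (Nat.factorial (n + 1) : ℚ) / ((Nat.factorial k : ℚ) * (Nat.factorial ((n - k) + 1) : ℚ)) := by
      rw [Nat.cast_choose ℚ (by omega : k ≤ n + 1), show n + 1 - k = (n - k) + 1 by omega]
    have c2 : ((2 * n + 1).choose n : ℚ)
        = (Nat.factorial (2 * n + 1) : ℚ) / ((Nat.factorial n : ℚ) * (Nat.factorial (n + 1) : ℚ)) := by
      rw [Nat.cast_choose ℚ (by omega : n ≤ 2 * n + 1), show 2 * n + 1 - n = n + 1 by omega]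
    have c3 : ((2 * n + 2).choose (n - k) : ℚ)
        = (Nat.factorial (2 * n + 2) : ℚ) / ((Nat.factorial (n - k) : ℚ) * (Nat.factorial (n + k + 2) : ℚ)) := by
      rw [Nat.cast_choose ℚ (by omega : n - k ≤ 2 * n + 2), show 2 * n + 2 - (n - k) = n + k + 2 by omega]
    have c4 : ((n + k).choose n : ℚ)
        = (Nat.factorial (n + k) : ℚ) / ((Nat.factorial n : ℚ) * (Nat.factorial k : ℚ)) := by
      rw [Nat.cast_choose ℚ (by omega : n ≤ n + k), show n + k - n = k by omega]
    have f1 : (Nat.factorial (n + 1) : ℚ) = ((n : ℚ) + 1) * (Nat.factorial n : ℚ) := by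
      rw [Nat.factorial_succ]; push_cast; ring
    have f2 : (Nat.factorial ((n - k) + 1) : ℚ) = ((n : ℚ) - k + 1) * (Nat.factorial (n - k) : ℚ) := by
      rw [Nat.factorial_succ]; push_cast [Nat.cast_sub hk]; ring
    have f3 : (Nat.factorial (2 * n + 2) : ℚ) = (2 * (n : ℚ) + 2) * (Nat.factorial (2 * n + 1) : ℚ) := by
      rw [show 2 * n + 2 = (2 * n + 1) + 1 by ring, Nat.factorial_succ]; push_cast; ring
    have f4 : (Nat.factorial (n + k + 2) : ℚ)
        = ((n : ℚ) + k + 2) * (((n : ℚ) + k + 1) * (Nat.factorial (n + k) : ℚ)) := by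
      rw [show n + k + 2 = (n + k + 1) + 1 by ring, Nat.factorial_succ,
        show n + k + 1 = (n + k) + 1 by ring, Nat.factorial_succ]
      push_cast; ring
    rw [c1, c2, c3, c4, f1, f2, f3, f4]
    have hnk : ((n : ℚ) - k + 1) ≠ 0 := by
      have : (k : ℚ) ≤ n := by exact_mod_cast hk
      nlinarith
    have hk0 : ((Nat.factorial k : ℚ)) ≠ 0 := by exact_mod_cast (Nat.factorial_pos k).ne'
    have hn0 : ((Nat.factorial n : ℚ)) ≠ 0 := by exact_mod_cast (Nat.factorial_pos n).ne'
    have hnk0 : ((Nat.factorial (n - k) : ℚ)) ≠ 0 := by exact_mod_cast (Nat.factorial_pos (n - k)).ne'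
    have hnk1 : ((Nat.factorial (n + k) : ℚ)) ≠ 0 := by exact_mod_cast (Nat.factorial_pos (n + k)).ne'
    have h2n : ((Nat.factorial (2 * n + 1) : ℚ)) ≠ 0 := by exact_mod_cast (Nat.factorial_pos (2 * n + 1)).ne'
    have hq1 : ((n : ℚ) + 1) ≠ 0 := by positivity
    have hq2 : ((n : ℚ) + k + 1) ≠ 0 := by positivity
    have hq3 : ((n : ℚ) + k + 2) ≠ 0 := by positivity
    field_simp
    ring
  rw [hg0, sub_zero, hgtop, hclosed] at htel
  exact mul_left_cancel₀ hfac htel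

/-- For `0 ≤ k ≤ n`,
`B_{n,k} = (1/(n+1)) * binom(2n+2, n-k) * binom(n+k, n)`; equivalently
`Σ_{s=k}^{n} binom(s,k) * ((n-s+1)/(n+1)) * binom(n+s,n)
   = (1/(n+1)) * binom(2n+2, n-k) * binom(n+k, n)`. -/
theorem borel_explicit_formula (n k : ℕ) (hk : k ≤ n) :
    (borelTriangle n k : ℚ)
        = ((2 * n + 2).choose (n - k) : ℚ) * ((n + k).choose n : ℚ) / ((n : ℚ) + 1) ∧
    ∑ s ∈ Finset.Icc k n,
        (s.choose k : ℚ) * ((((n - s + 1 : ℕ) : ℚ) / ((n : ℚ) + 1)) * ((n + s).choose n : ℚ))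
      = ((2 * n + 2).choose (n - k) : ℚ) * ((n + k).choose n : ℚ) / ((n : ℚ) + 1) := by
  have hsum : ∀ s ∈ Finset.Icc k n,
      (s.choose k : ℚ) * ((((n - s + 1 : ℕ) : ℚ) / ((n : ℚ) + 1)) * ((n + s).choose n : ℚ))
        = (s.choose k : ℚ) * (((n : ℚ) - s + 1) * ((n + s).choose n : ℚ)) / ((n : ℚ) + 1) := by
    intro s hs
    simp only [Finset.mem_Icc] at hs
    rw [Nat.cast_add, Nat.cast_sub hs.2]
    push_cast
    ring
  have key : ∑ s ∈ Finset.Icc k n,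
      (s.choose k : ℚ) * ((((n - s + 1 : ℕ) : ℚ) / ((n : ℚ) + 1)) * ((n + s).choose n : ℚ))
      = ((2 * n + 2).choose (n - k) : ℚ) * ((n + k).choose n : ℚ) / ((n : ℚ) + 1) := by
    rw [Finset.sum_congr rfl hsum, ← Finset.sum_div, core_sum n k hk]
  constructor
  · unfold borelTriangle
    push_cast
    rw [← key]
    apply Finset.sum_congr rfl
    intro s hs
    simp only [Finset.mem_Icc] at hs
    rw [catalan_cast n s hs.2]
    ring
  · exact key
end

section
/- For every integer n ≥ 0, the sum of the entries of the n-th row of Catalan's triangle equals the (n+1)-st Catalan number: Σ_{k=0}^{n} C_{n,k} = catalan(n+1), where catalan(m) = (1/(m+1)) · binom(2m, m). -/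
open Finset

theorem catalanTriangle_add_choose_succ {n k : ℕ} (h : k ≤ n) :
    catalanTriangle n k + (n + k).choose (n + 1) = (n + k).choose n := by
  set C := (n + k).choose n
  set D := (n + k).choose (n + 1)
  have hD : D * (n + 1) = C * k := by
    simpa only [Nat.add_sub_cancel_left] using Nat.choose_succ_right_eq (n + k) n
  have hDC : D ≤ C := Nat.le_of_mul_le_mul_right (by rw [hD]; gcongr; omega) n.succ_pos
  have hrow : (n - k + 1) * C = (C - D) * (n + 1) := by
    rw [Nat.sub_mul, hD, ← Nat.mul_sub, mul_comm]
    congr 1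
    omega
  rw [catalanTriangle, Nat.div_eq_of_eq_mul_left n.succ_pos hrow, Nat.sub_add_cancel hDC]

theorem Nat.sum_range_add_choose_succ (m r : ℕ) :
    ∑ i ∈ range m, (i + r).choose (r + 1) = (m + r).choose (r + 2) := by
  induction m with
  | zero => exact (Nat.choose_eq_zero_of_lt (by omega)).symm
  | succ m ih => rw [sum_range_succ, ih, add_right_comm, Nat.choose_succ_succ' (m + r), add_comm]

theorem catalan_succ_add_choose (n : ℕ) :
    catalan (n + 1) + (2 * n + 1).choose (n + 2) = (2 * n + 1).choose (n + 1) := by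
  have hcentral : (n + 1).centralBinom = 2 * (2 * n + 1).choose (n + 1) := by
    rw [Nat.centralBinom, show 2 * (n + 1) = 2 * n + 1 + 1 by ring, Nat.choose_succ_succ,
      ← Nat.choose_symm_half, two_mul (Nat.choose _ _)]
  have hnext : (2 * n + 1).choose (n + 2) * (n + 2) = (2 * n + 1).choose (n + 1) * n := by
    simpa only [show 2 * n + 1 - (n + 1) = n by omega] using
      Nat.choose_succ_right_eq (2 * n + 1) (n + 1)
  apply Nat.eq_of_mul_eq_mul_left (show 0 < n + 2 by omega)
  rw [mul_add, succ_mul_catalan_eq_centralBinom, hcentral, mul_comm (n + 2), hnext]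
  ring

/-- The sum of the entries of the `n`-th row of Catalan's triangle is the `(n+1)`-st
Catalan number. -/
theorem catalanTriangle_row_sum (n : ℕ) :
    ∑ k ∈ Finset.range (n + 1), catalanTriangle n k = catalan (n + 1) := by
  have hsplit : ∑ k ∈ range (n + 1), catalanTriangle n k
      + ∑ k ∈ range (n + 1), (k + n).choose (n + 1) = ∑ k ∈ range (n + 1), (k + n).choose n := by
    rw [← sum_add_distrib]
    refine sum_congr rfl fun k hk => ?_
    rw [add_comm k]
    exact catalanTriangle_add_choose_succ (Nat.lt_succ_iff.mp (mem_range.mp hk))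
  rw [Nat.sum_range_add_choose, Nat.sum_range_add_choose_succ, show n + 1 + n = 2 * n + 1 by ring,
    show n + n + 1 = 2 * n + 1 by ring, ← catalan_succ_add_choose] at hsplit
  exact Nat.add_right_cancel hsplit
end

section
/- For all integers 0 ≤ k ≤ n, the number of words of length n+k over the alphabet {E, N} containing exactly n letters E and k letters N, such that every prefix contains at least as many E's as N's, equals C_{n,k}. (Such words encode lattice paths from (0,0) to (n,k) with unit east and north steps that never go above the line y = x.) -/
/-- A word over the alphabet `{E, N}` (with `true = E`, `false = N`) with `n` letters `E` and
`k` letters `N` such that every prefix contains at least as many `E`'s as `N`'s; these encode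
lattice paths from `(0,0)` to `(n,k)` not going above the line `y = x`. -/
def IsBallotWord (n k : ℕ) (w : List Bool) : Prop :=
  w.length = n + k ∧ w.count true = n ∧ w.count false = k ∧
    ∀ i, (w.take i).count false ≤ (w.take i).count true

/-! Both `C_{n,k}` and the number `B_{n,k}` of ballot words satisfy the reflection-principle
identity `X_{n,k} + binom(n+k, n+1) = binom(n+k, n)`. For `C_{n,k}` this is arithmetic, since
`(n+1) binom(n+k, n+1) = k binom(n+k, n)`. For `B_{n,k}` (with `k ≤ n+1`) it follows by induction
on `n + k`: removing the last letter gives `B_{m+1,j+1} = B_{m,j+1} + B_{m+1,j}` for `j ≤ m`,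
matching Pascal's rule, while `B_{n,0} = 1` and `B_{n,n+1} = 0` match `binom(n, n+1) = 0` and
`binom(2n+1, n+1) = binom(2n+1, n)`. -/

theorem catalanTriangle_add_choose {n k : ℕ} (hk : k ≤ n) :
    catalanTriangle n k + (n + k).choose (n + 1) = (n + k).choose n := by
  have hsucc : (n + k).choose (n + 1) * (n + 1) = (n + k).choose n * k := by
    rw [Nat.choose_succ_right_eq, Nat.add_sub_cancel_left]
  have hle : (n + k).choose (n + 1) ≤ (n + k).choose n :=
    Nat.le_of_mul_le_mul_right (hsucc ▸ Nat.mul_le_mul_left _ (by omega)) n.succ_pos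
  have hnum : (n - k + 1) * (n + k).choose n
      = (n + 1) * ((n + k).choose n - (n + k).choose (n + 1)) := by
    zify [hle, hk] at hsucc ⊢
    linear_combination hsucc
  rw [catalanTriangle, hnum, Nat.mul_div_cancel_left _ n.succ_pos, Nat.sub_add_cancel hle]

theorem List.forall_take_append_singleton {α : Type*} (P : List α → Prop) (w : List α) (x : α) :
    (∀ i, P ((w ++ [x]).take i)) ↔ (∀ i, P (w.take i)) ∧ P (w ++ [x]) := by
  constructor
  · intro h
    refine ⟨fun i => ?_, by simpa [List.take_of_length_le] using h (w.length + 1)⟩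
    rcases le_or_gt i w.length with hi | hi
    · simpa [List.take_append_of_le_length hi] using h i
    · simpa [List.take_of_length_le hi.le] using h w.length
  · rintro ⟨hw, hx⟩ i
    rcases le_or_gt i w.length with hi | hi
    · simpa [List.take_append_of_le_length hi] using hw i
    · rwa [List.take_of_length_le (by simp; omega)]

theorem isBallotWord_append_true {m k : ℕ} {w : List Bool} (hk : k ≤ m + 1) :
    IsBallotWord (m + 1) k (w ++ [true]) ↔ IsBallotWord m k w := by
  simp only [IsBallotWord,
    List.forall_take_append_singleton fun u : List Bool => u.count false ≤ u.count true,
    List.length_append, List.length_singleton, List.count_append, List.count_singleton, beq_true,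
    beq_false, Bool.not_true, reduceIte, add_zero, Bool.false_eq_true]
  constructor
  · rintro ⟨hl, ht, hf, hp, -⟩
    exact ⟨by omega, by omega, hf, hp⟩
  · rintro ⟨hl, ht, hf, hp⟩
    exact ⟨by omega, by omega, hf, hp, by omega⟩

theorem isBallotWord_append_false {n j : ℕ} {w : List Bool} (hj : j + 1 ≤ n) :
    IsBallotWord n (j + 1) (w ++ [false]) ↔ IsBallotWord n j w := by
  simp only [IsBallotWord,
    List.forall_take_append_singleton fun u : List Bool => u.count false ≤ u.count true,
    List.length_append, List.length_singleton, List.count_append, List.count_singleton, beq_true,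
    beq_false, Bool.not_false, reduceIte, add_zero, Bool.false_eq_true]
  constructor
  · rintro ⟨hl, ht, hf, hp, -⟩
    exact ⟨by omega, ht, by omega, hp⟩
  · rintro ⟨hl, ht, hf, hp⟩
    exact ⟨by omega, ht, by omega, hp, by omega⟩

def ballotWords (n k : ℕ) : Set (List Bool) := {w | IsBallotWord n k w}

theorem ballotWords_finite (n k : ℕ) : (ballotWords n k).Finite :=
  (List.finite_length_eq Bool (n + k)).subset fun _ hw => hw.1

theorem ballotWords_zero_right (n : ℕ) : ballotWords n 0 = {List.replicate n true} := by
  ext w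
  constructor
  · rintro ⟨hl, -, hf, -⟩
    refine List.eq_replicate_iff.mpr ⟨by omega, fun b hb => ?_⟩
    cases b
    · exact absurd hb (List.count_eq_zero.mp hf)
    · rfl
  · rintro rfl
    refine ⟨by simp, by simp, ?_, fun i => ?_⟩ <;> simp [List.count_replicate]

theorem ballotWords_eq_empty {n k : ℕ} (h : n < k) : ballotWords n k = ∅ := by
  refine Set.eq_empty_of_forall_notMem fun w ⟨_, ht, hf, hp⟩ => ?_
  have := hp w.length
  rw [List.take_length, ht, hf] at this
  omega

theorem ballotWords_succ_succ {m j : ℕ} (hj : j ≤ m) :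
    ballotWords (m + 1) (j + 1) =
      (· ++ [true]) '' ballotWords m (j + 1) ∪ (· ++ [false]) '' ballotWords (m + 1) j := by
  ext w
  rcases List.eq_nil_or_concat' w with rfl | ⟨u, x, rfl⟩
  · simp [ballotWords, IsBallotWord]
  · cases x <;> simp [ballotWords, isBallotWord_append_true, isBallotWord_append_false, hj]

theorem ncard_ballotWords_succ_succ {m j : ℕ} (hj : j ≤ m) :
    (ballotWords (m + 1) (j + 1)).ncard =
      (ballotWords m (j + 1)).ncard + (ballotWords (m + 1) j).ncard := by
  have hdisj : Disjoint ((· ++ [true]) '' ballotWords m (j + 1))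
      ((· ++ [false]) '' ballotWords (m + 1) j) := by
    rw [Set.disjoint_left]
    rintro _ ⟨u, -, rfl⟩ ⟨v, -, huv⟩
    simpa using congrArg List.getLast? huv
  rw [ballotWords_succ_succ hj, Set.ncard_union_eq hdisj ((ballotWords_finite _ _).image _)
      ((ballotWords_finite _ _).image _),
    Set.ncard_image_of_injective _ (List.append_left_injective [true]),
    Set.ncard_image_of_injective _ (List.append_left_injective [false])]

theorem ncard_ballotWords_add_choose : ∀ {n k : ℕ}, k ≤ n + 1 →
    (ballotWords n k).ncard + (n + k).choose (n + 1) = (n + k).choose n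
  | n, 0, _ => by simp [ballotWords_zero_right]
  | n, k + 1, hk => by
    rcases (Nat.le_of_succ_le_succ hk).eq_or_lt with rfl | hlt
    · rw [ballotWords_eq_empty k.lt_succ_self, Set.ncard_empty, zero_add,
        show k + (k + 1) = 2 * k + 1 by ring, Nat.choose_symm_half]
    obtain ⟨m, rfl⟩ : ∃ m, n = m + 1 := ⟨n - 1, by omega⟩
    have hleft := ncard_ballotWords_add_choose (n := m) (k := k + 1) (by omega)
    have hright := ncard_ballotWords_add_choose (n := m + 1) (k := k) (by omega)
    rw [show m + (k + 1) = m + k + 1 by ring] at hleft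
    rw [show m + 1 + k = m + k + 1 by ring] at hright
    rw [ncard_ballotWords_succ_succ (by omega), show m + 1 + (k + 1) = m + k + 1 + 1 by ring,
      Nat.choose_succ_succ' (m + k + 1) (m + 1), Nat.choose_succ_succ' (m + k + 1) m]
    omega
termination_by n k => n + k

/-- The number of such words equals `C_{n,k}`. -/
theorem card_ballotWords (n k : ℕ) (hk : k ≤ n) :
    Nat.card {w : List Bool // IsBallotWord n k w} = catalanTriangle n k := by
  have hballot := ncard_ballotWords_add_choose (hk.trans n.le_succ)
  have hcatalan := catalanTriangle_add_choose hk
  exact (Nat.card_coe_set_eq (ballotWords n k)).trans (by omega)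
end

section
/- For all integers 0 ≤ k ≤ n, the number of Dyck words of semi-length n+1 whose maximal initial run of U's has length exactly n−k+1 (i.e., whose first peak is at height n−k+1) equals C_{n,k}. -/
open List

/-- A Dyck word of semi-length `m`: a word in `U = true` and `D = false` of length `2m` with
`m` `U`'s and `m` `D`'s such that every prefix has at least as many `U`'s as `D`'s. -/
def IsDyckWord (m : ℕ) (w : List Bool) : Prop :=
  w.length = 2 * m ∧ w.count true = m ∧ w.count false = m ∧
    ∀ i, (w.take i).count false ≤ (w.take i).count true

/-- Prefix condition with slack `h`. -/
def PrefOK (h : ℕ) (w : List Bool) : Prop :=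
  ∀ i, (w.take i).count false ≤ (w.take i).count true + h

lemma prefOK_cons_true {h : ℕ} {w : List Bool} :
    PrefOK h (true :: w) ↔ PrefOK (h + 1) w := by
  constructor
  · intro H i
    have := H (i + 1)
    simp [List.count_cons] at this
    omega
  · intro H i
    cases i with
    | zero => simp [PrefOK]
    | succ i =>
      have := H i
      simp [List.count_cons]
      omega

lemma prefOK_cons_false {h : ℕ} {w : List Bool} :
    PrefOK (h + 1) (false :: w) ↔ PrefOK h w := by
  constructor
  · intro H i
    have := H (i + 1)
    simp [List.count_cons] at this
    omega
  · intro H i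
    cases i with
    | zero => simp [PrefOK]
    | succ i =>
      have := H i
      simp [List.count_cons]
      omega

lemma not_prefOK_cons_false_zero {w : List Bool} : ¬ PrefOK 0 (false :: w) := by
  intro H
  have := H 1
  simp [List.count_cons] at this

lemma prefOK_replicate_append {h j : ℕ} {w : List Bool} :
    PrefOK h (replicate j true ++ w) ↔ PrefOK (h + j) w := by
  induction j generalizing h with
  | zero => simp
  | succ j ih =>
    rw [List.replicate_succ, List.cons_append, prefOK_cons_true, ih,
      show h + 1 + j = h + (j + 1) by omega]

/-- all bool lists of length `L` -/
def boolLists : ℕ → Finset (List Bool)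
  | 0 => {[]}
  | (L + 1) => ((boolLists L).image (fun t => true :: t)) ∪
      ((boolLists L).image (fun t => false :: t))

lemma mem_boolLists : ∀ (L : ℕ) (w : List Bool), w ∈ boolLists L ↔ w.length = L := by
  intro L
  induction L with
  | zero => intro w; simp [boolLists, List.length_eq_zero_iff]
  | succ L ih =>
    intro w
    cases w with
    | nil => simp [boolLists]
    | cons x t =>
      cases x <;> simp [boolLists, ih, eq_comm]

open Classical in
noncomputable def ballotSet (a b h : ℕ) : Finset (List Bool) :=
  (boolLists (a + b)).filter
    (fun w => w.count true = a ∧ w.count false = b ∧ PrefOK h w)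

lemma mem_ballotSet {a b h : ℕ} {w : List Bool} :
    w ∈ ballotSet a b h ↔ w.count true = a ∧ w.count false = b ∧ PrefOK h w := by
  classical
  rw [ballotSet, Finset.mem_filter, mem_boolLists]
  constructor
  · tauto
  · intro H
    refine ⟨?_, H⟩
    have := List.count_true_add_count_false w
    omega

lemma ballotSet_b_zero (a h : ℕ) : ballotSet a 0 h = {replicate a true} := by
  ext w
  rw [mem_ballotSet, Finset.mem_singleton]
  constructor
  · rintro ⟨h1, h2, h3⟩
    rw [List.eq_replicate_iff]
    have hlen := List.count_true_add_count_false w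
    refine ⟨by omega, fun b hb => ?_⟩
    cases b
    · exact absurd (List.count_pos_iff.2 hb) (by omega)
    · rfl
  · rintro rfl
    refine ⟨by simp, by rw [List.count_replicate]; norm_num, fun i => ?_⟩
    rw [List.take_replicate, List.count_replicate, List.count_replicate]
    norm_num

lemma ballotSet_a_zero (b h : ℕ) (hb : b ≤ h) : ballotSet 0 b h = {replicate b false} := by
  ext w
  rw [mem_ballotSet, Finset.mem_singleton]
  constructor
  · rintro ⟨h1, h2, h3⟩
    rw [List.eq_replicate_iff]
    have hlen := List.count_true_add_count_false w
    refine ⟨by omega, fun b hb => ?_⟩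
    cases b
    · rfl
    · exact absurd (List.count_pos_iff.2 hb) (by omega)
  · rintro rfl
    refine ⟨by rw [List.count_replicate]; norm_num, by simp, fun i => ?_⟩
    rw [List.take_replicate]
    simp only [List.count_replicate]
    norm_num
    omega

lemma cons_inj (x : Bool) : Function.Injective (fun t : List Bool => x :: t) := by
  intro s t h
  simpa using h

lemma ballotSet_decomp (a b h : ℕ) :
    ballotSet (a + 1) (b + 1) (h + 1) =
      ((ballotSet a (b + 1) (h + 2)).image (fun t => true :: t)) ∪
      ((ballotSet (a + 1) b h).image (fun t => false :: t)) := by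
  ext w
  rw [Finset.mem_union, Finset.mem_image, Finset.mem_image]
  cases w with
  | nil => simp [mem_ballotSet]
  | cons x t =>
    cases x
    · constructor
      · rw [mem_ballotSet]
        rintro ⟨h1, h2, h3⟩
        refine Or.inr ⟨t, mem_ballotSet.2 ⟨by simpa using h1,
          by simp [List.count_cons] at h2; omega, prefOK_cons_false.1 h3⟩, rfl⟩
      · rintro (⟨u, _, h'⟩ | ⟨u, hu, h'⟩)
        · exact absurd h' (by simp)
        · obtain ⟨h1, h2, h3⟩ := mem_ballotSet.1 hu
          obtain rfl : u = t := by simpa using h'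
          exact mem_ballotSet.2 ⟨by simpa using h1, by simp [List.count_cons]; omega,
            prefOK_cons_false.2 h3⟩
    · constructor
      · rw [mem_ballotSet]
        rintro ⟨h1, h2, h3⟩
        refine Or.inl ⟨t, mem_ballotSet.2 ⟨by simp [List.count_cons] at h1; omega,
          by simpa using h2, by rw [show h + 2 = h + 1 + 1 by omega]; exact prefOK_cons_true.1 h3⟩, rfl⟩
      · rintro (⟨u, hu, h'⟩ | ⟨u, _, h'⟩)
        · obtain ⟨h1, h2, h3⟩ := mem_ballotSet.1 hu
          obtain rfl : u = t := by simpa using h'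
          refine mem_ballotSet.2 ⟨by simp [List.count_cons]; omega, by simpa using h2,
            prefOK_cons_true.2 (by rw [show h + 1 + 1 = h + 2 by omega]; exact h3)⟩
        · exact absurd h' (by simp)

lemma ballotSet_decomp_zero (a b : ℕ) :
    ballotSet (a + 1) (b + 1) 0 = (ballotSet a (b + 1) 1).image (fun t => true :: t) := by
  ext w
  rw [Finset.mem_image]
  cases w with
  | nil => simp [mem_ballotSet]
  | cons x t =>
    cases x
    · constructor
      · rw [mem_ballotSet]
        rintro ⟨h1, h2, h3⟩
        exact absurd h3 not_prefOK_cons_false_zero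
      · rintro ⟨u, _, h'⟩
        exact absurd h' (by simp)
    · constructor
      · rw [mem_ballotSet]
        rintro ⟨h1, h2, h3⟩
        exact ⟨t, mem_ballotSet.2 ⟨by simp [List.count_cons] at h1; omega,
          by simpa using h2, prefOK_cons_true.1 h3⟩, rfl⟩
      · rintro ⟨u, hu, h'⟩
        obtain ⟨h1, h2, h3⟩ := mem_ballotSet.1 hu
        obtain rfl : u = t := by simpa using h'
        exact mem_ballotSet.2 ⟨by simp [List.count_cons]; omega, by simpa using h2,
          prefOK_cons_true.2 h3⟩

lemma ballot_card : ∀ (N a b h : ℕ), a + b ≤ N → b ≤ a + h →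
    ((ballotSet a b h).card : ℤ) = ((a + b).choose b : ℤ) - ((a + b).choose (a + h + 1) : ℤ) := by
  intro N
  induction N with
  | zero =>
    intro a b h h1 h2
    obtain ⟨rfl, rfl⟩ : a = 0 ∧ b = 0 := by omega
    rw [ballotSet_b_zero]
    simp
  | succ N ih =>
    intro a b h h1 h2
    match b, a, h with
    | 0, a, h =>
      rw [ballotSet_b_zero]
      norm_num [Nat.choose_eq_zero_of_lt (show a < a + h + 1 by omega)]
    | (b + 1), 0, h =>
      rw [ballotSet_a_zero _ _ (by omega)]
      norm_num [Nat.choose_eq_zero_of_lt (show b + 1 < h + 1 by omega), Nat.choose_self]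
    | (b + 1), (a + 1), 0 =>
      rw [ballotSet_decomp_zero, Finset.card_image_of_injective _ (cons_inj true)]
      rw [ih a (b + 1) 1 (by omega) (by omega)]
      have p1 : ((a + b + 2).choose (b + 1) : ℤ)
          = (a + b + 1).choose b + (a + b + 1).choose (b + 1) := by
        exact_mod_cast Nat.choose_succ_succ (a + b + 1) b
      have p2 : ((a + b + 2).choose (a + 2) : ℤ)
          = (a + b + 1).choose (a + 1) + (a + b + 1).choose (a + 2) := by
        exact_mod_cast Nat.choose_succ_succ (a + b + 1) (a + 1)
      have s1 : ((a + b + 1).choose b : ℤ) = (a + b + 1).choose (a + 1) := by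
        rw [show (a + b + 1).choose (a + 1) = (a + b + 1).choose ((a + b + 1) - b) by
          congr 1; omega, Nat.choose_symm (by omega)]
      rw [show a + (b + 1) = a + b + 1 by ring, show a + 1 + 1 = a + 2 by ring,
        show a + 1 + (b + 1) = a + b + 2 by ring, show a + 1 + 0 + 1 = a + 2 by ring]
      rw [p1, p2]
      linarith
    | (b + 1), (a + 1), (h + 1) =>
      have hdisj : Disjoint ((ballotSet a (b + 1) (h + 2)).image (fun t => true :: t))
          ((ballotSet (a + 1) b h).image (fun t => false :: t)) := by
        rw [Finset.disjoint_left]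
        rintro w hw hw'
        rw [Finset.mem_image] at hw hw'
        obtain ⟨u, _, rfl⟩ := hw
        obtain ⟨v, _, h'⟩ := hw'
        simp at h'
      rw [ballotSet_decomp, Finset.card_union_of_disjoint hdisj,
        Finset.card_image_of_injective _ (cons_inj true),
        Finset.card_image_of_injective _ (cons_inj false)]
      push_cast
      rw [ih a (b + 1) (h + 2) (by omega) (by omega), ih (a + 1) b h (by omega) (by omega)]
      have p1 : ((a + b + 2).choose (b + 1) : ℤ)
          = (a + b + 1).choose b + (a + b + 1).choose (b + 1) := by
        exact_mod_cast Nat.choose_succ_succ (a + b + 1) b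
      have p2 : ((a + b + 2).choose (a + h + 3) : ℤ)
          = (a + b + 1).choose (a + h + 2) + (a + b + 1).choose (a + h + 3) := by
        exact_mod_cast Nat.choose_succ_succ (a + b + 1) (a + h + 2)
      rw [show a + (b + 1) = a + b + 1 by ring, show a + (h + 2) + 1 = a + h + 3 by ring,
        show a + 1 + b = a + b + 1 by ring, show a + 1 + h + 1 = a + h + 2 by ring,
        show a + 1 + (b + 1) = a + b + 2 by ring, show a + 1 + (h + 1) + 1 = a + h + 3 by ring]
      rw [p1, p2]
      linarith

lemma takeWhile_replicate_append (j : ℕ) (u : List Bool) :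
    ((replicate j true ++ false :: u).takeWhile (fun b => b = true)) = replicate j true := by
  induction j with
  | zero => simp
  | succ j ih =>
    rw [List.replicate_succ, List.cons_append, List.takeWhile_cons]
    simp [ih]

/-- The number of Dyck words of semi-length `n+1` whose maximal initial run of `U`'s has
length exactly `n - k + 1` (first peak at height `n - k + 1`) equals `C_{n,k}`. -/
theorem card_dyckWords_firstPeak (n k : ℕ) (hk : k ≤ n) :
    Nat.card {w : List Bool // IsDyckWord (n + 1) w ∧
        (w.takeWhile (fun b => b = true)).length = n - k + 1}
      = catalanTriangle n k := by
  have himage : ∀ w : List Bool,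
      (IsDyckWord (n + 1) w ∧ (w.takeWhile (fun b => b = true)).length = n - k + 1) ↔
      w ∈ (ballotSet k n (n - k)).image
        (fun u => replicate (n - k + 1) true ++ false :: u) := by
    intro w
    constructor
    · rintro ⟨⟨hl, hct, hcf, hpref⟩, hlen⟩
      set p : Bool → Bool := (fun b => b = true) with hp
      have htw : w.takeWhile p = replicate (n - k + 1) true :=
        List.eq_replicate_iff.2 ⟨hlen, fun b hb => by
          simpa [hp] using List.mem_takeWhile_imp hb⟩
      have hw1 : replicate (n - k + 1) true ++ w.dropWhile p = w := by
        rw [← htw]; exact List.takeWhile_append_dropWhile (p := p) (l := w)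
      have hne : w.dropWhile p ≠ [] := by
        intro h0
        have : w.length = n - k + 1 := by
          conv_lhs => rw [← hw1]
          rw [h0]; simp
        omega
      have hhead : (w.dropWhile p).head hne = false := by
        have := List.head_dropWhile_not p (l := w) hne
        revert this
        cases (w.dropWhile p).head hne <;> simp [hp]
      have hw2 : w = replicate (n - k + 1) true ++ false :: (w.dropWhile p).tail := by
        conv_lhs => rw [← hw1]
        rw [← hhead, List.cons_head_tail]
      refine Finset.mem_image.2 ⟨(w.dropWhile p).tail, ?_, hw2.symm⟩
      rw [mem_ballotSet]
      rw [hw2] at hct hcf hpref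
      simp [List.count_append, List.count_cons, List.count_replicate] at hct hcf
      refine ⟨by omega, by omega, ?_⟩
      have h1 : PrefOK 0 (replicate (n - k + 1) true ++ false :: (w.dropWhile p).tail) := hpref
      rw [prefOK_replicate_append] at h1
      rw [show 0 + (n - k + 1) = (n - k) + 1 by omega] at h1
      exact prefOK_cons_false.1 h1
    · intro hw
      obtain ⟨u, hu, rfl⟩ := Finset.mem_image.1 hw
      obtain ⟨hct, hcf, hpref⟩ := mem_ballotSet.1 hu
      have hlen : u.length = k + n := by
        have := List.count_true_add_count_false u
        omega
      refine ⟨⟨?_, ?_, ?_, ?_⟩, ?_⟩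
      · simp [List.length_append, hlen]; omega
      · simp [List.count_append, List.count_cons, List.count_replicate, hct]; omega
      · rw [List.count_append]
        simp [List.count_cons, List.count_replicate, hcf]
      · have h1 : PrefOK ((n - k) + 1) (false :: u) := prefOK_cons_false.2 hpref
        have h2 : PrefOK 0 (replicate (n - k + 1) true ++ false :: u) := by
          rw [prefOK_replicate_append, show 0 + (n - k + 1) = (n - k) + 1 by omega]
          exact h1
        exact h2
      · rw [takeWhile_replicate_append]
        simp
  have hinj : Function.Injective
      (fun u : List Bool => replicate (n - k + 1) true ++ false :: u) := by
    intro u v huv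
    simpa using huv
  rw [Nat.card_congr (Equiv.subtypeEquivRight himage), Nat.card_eq_finsetCard,
    Finset.card_image_of_injective _ hinj]
  have hz := ballot_card (k + n) k n (n - k) le_rfl (by omega)
  rw [show k + (n - k) + 1 = n + 1 by omega, show k + n = n + k by ring] at hz
  have hmul : (n + k).choose (n + 1) * (n + 1) = (n + k).choose n * k := by
    have := Nat.choose_succ_right_eq (n + k) n
    rw [show n + k - n = k by omega] at this
    exact this
  have hle : (n + k).choose (n + 1) ≤ (n + k).choose n := by
    refine Nat.le_of_mul_le_mul_right ?_ (show 0 < n + 1 by omega)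
    rw [hmul]
    exact Nat.mul_le_mul_left _ (by omega)
  have hcard : (ballotSet k n (n - k)).card
      = (n + k).choose n - (n + k).choose (n + 1) := by
    zify [hle]
    linarith [hz]
  rw [hcard]
  unfold catalanTriangle
  have hmulZ : ((n + k).choose (n + 1) : ℤ) * (n + 1) = ((n + k).choose n : ℤ) * k := by
    exact_mod_cast hmul
  have key : (n - k + 1) * (n + k).choose n
      = (n + 1) * ((n + k).choose n - (n + k).choose (n + 1)) := by
    zify [hle, hk]
    linear_combination hmulZ
  rw [key, Nat.mul_div_cancel_left _ (show 0 < n + 1 by omega)]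
end

section
/- For all integers 0 ≤ k ≤ n, the number of nondecreasing parking functions of length n+1 whose maximum entry equals k+1 is C_{n,k}. -/
/-- A nondecreasing parking function of length `m`, written as a monotone function
`a : Fin m → ℕ` of positive integers with `a i ≤ i + 1` (1-based: `a_i ≤ i`). -/
def IsNDParkingFunction (m : ℕ) (a : Fin m → ℕ) : Prop :=
  Monotone a ∧ (∀ i, 1 ≤ a i) ∧ ∀ i : Fin m, a i ≤ (i : ℕ) + 1
/-! The maximum of a nondecreasing sequence is its last entry. Deleting the last entry `k + 2` of
such a parking function of length `n + 2` leaves one of length `n + 1` with last entry at most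
`k + 2`; splitting by whether that entry equals `k + 2` gives the recurrence
`N(n+1, k+1) = N(n+1, k) + N(n, k+1)` for the counts, with `N(n, 0) = 1` and `N(n, n+1) = 0`.
The ballot numbers `binom(n+k, n) - binom(n+k, n+1) = C_{n,k}` satisfy the same recurrence
by Pascal's rule. -/

theorem Fin.monotone_snoc_iff {α : Type*} [Preorder α] {m : ℕ} {b : Fin m → α} {x : α} :
    Monotone (Fin.snoc b x : Fin (m + 1) → α) ↔ Monotone b ∧ ∀ i, b i ≤ x := by
  constructor
  · intro h
    refine ⟨fun i j hij => ?_, fun i => ?_⟩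
    · simpa using h (Fin.castSucc_le_castSucc_iff.mpr hij)
    · simpa using h (Fin.le_last i.castSucc)
  · rintro ⟨hb, hx⟩ i j hij
    induction j using Fin.lastCases with
    | last => induction i using Fin.lastCases <;> simp [hx]
    | cast j =>
      induction i using Fin.lastCases with
      | last => exact absurd hij (not_le.mpr (Fin.castSucc_lt_last j))
      | cast i => simpa using hb (Fin.castSucc_le_castSucc_iff.mp hij)

theorem isNDParkingFunction_snoc_iff {m : ℕ} {b : Fin m → ℕ} {x : ℕ} :
    IsNDParkingFunction (m + 1) (Fin.snoc b x) ↔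
      IsNDParkingFunction m b ∧ (∀ i, b i ≤ x) ∧ 1 ≤ x ∧ x ≤ m + 1 := by
  simp only [IsNDParkingFunction, Fin.monotone_snoc_iff, Fin.forall_fin_succ', Fin.snoc_castSucc,
    Fin.snoc_last, Fin.val_castSucc, Fin.val_last]
  tauto

theorem finite_setOf_isNDParkingFunction (m : ℕ) : {a | IsNDParkingFunction m a}.Finite :=
  (Set.Finite.pi fun _ => Set.finite_Iic m).subset fun _ ha i _ =>
    (ha.2.2 i).trans (Nat.succ_le_of_lt i.isLt)

def ndpfLastEq (n k : ℕ) : Set (Fin (n + 1) → ℕ) :=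
  {a | IsNDParkingFunction (n + 1) a ∧ a (Fin.last n) = k + 1}

def ndpfLastLE (n t : ℕ) : Set (Fin (n + 1) → ℕ) :=
  {a | IsNDParkingFunction (n + 1) a ∧ a (Fin.last n) ≤ t}

theorem ndpfLastEq_finite (n k : ℕ) : (ndpfLastEq n k).Finite :=
  (finite_setOf_isNDParkingFunction _).subset fun _ ha => ha.1

theorem ndpfLastLE_finite (n t : ℕ) : (ndpfLastLE n t).Finite :=
  (finite_setOf_isNDParkingFunction _).subset fun _ ha => ha.1

theorem ndpfLastEq_zero (n : ℕ) : ndpfLastEq n 0 = {fun _ => 1} := by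
  ext a
  simp only [ndpfLastEq, IsNDParkingFunction, Set.mem_ofPred_eq, Set.mem_singleton_iff]
  constructor
  · rintro ⟨⟨hmono, hpos, -⟩, hlast⟩
    funext i
    have := hmono (Fin.le_last i)
    have := hpos i
    omega
  · rintro rfl
    exact ⟨⟨monotone_const, fun _ => le_rfl, fun _ => by simp⟩, rfl⟩

theorem ndpfLastEq_succ_self_eq_empty (n : ℕ) : ndpfLastEq n (n + 1) = ∅ := by
  ext a
  simp only [ndpfLastEq, Set.mem_ofPred_eq, Set.mem_empty_iff_false, iff_false, not_and]
  intro ha hlast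
  have := ha.2.2 (Fin.last n)
  simp only [Fin.val_last] at this
  omega

theorem ndpfLastLE_succ (n t : ℕ) : ndpfLastLE n (t + 1) = ndpfLastLE n t ∪ ndpfLastEq n t := by
  ext a
  simp only [ndpfLastLE, ndpfLastEq, Set.mem_union, Set.mem_ofPred_eq, Nat.le_succ_iff, and_or_left]

theorem ncard_ndpfLastLE_succ (n t : ℕ) :
    (ndpfLastLE n (t + 1)).ncard = (ndpfLastLE n t).ncard + (ndpfLastEq n t).ncard := by
  rw [ndpfLastLE_succ, Set.ncard_union_eq _ (ndpfLastLE_finite n t) (ndpfLastEq_finite n t)]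
  exact Set.disjoint_left.mpr fun _ ha ha' => by
    have := ha.2
    have := ha'.2
    omega

theorem ndpfLastEq_succ_eq_image (n j : ℕ) (hj : j ≤ n + 1) :
    ndpfLastEq (n + 1) j = (Fin.snoc · (j + 1)) '' ndpfLastLE n (j + 1) := by
  ext a
  constructor
  · rintro ⟨ha, hlast⟩
    rw [← Fin.snoc_init_self a, hlast, isNDParkingFunction_snoc_iff] at ha
    exact ⟨Fin.init a, ⟨ha.1, ha.2.1 _⟩, hlast ▸ Fin.snoc_init_self a⟩
  · rintro ⟨b, ⟨hb, hblast⟩, rfl⟩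
    refine ⟨isNDParkingFunction_snoc_iff.mpr ⟨hb, fun i => ?_, by omega, by omega⟩, by simp⟩
    exact (hb.1 (Fin.le_last i)).trans hblast

theorem ncard_ndpfLastEq_succ_succ (n k : ℕ) (hk : k ≤ n) :
    (ndpfLastEq (n + 1) (k + 1)).ncard =
      (ndpfLastEq (n + 1) k).ncard + (ndpfLastEq n (k + 1)).ncard := by
  rw [ndpfLastEq_succ_eq_image n (k + 1) (by omega), ndpfLastEq_succ_eq_image n k (by omega),
    Set.ncard_image_of_injective _ (Fin.snoc_left_injective (α := fun _ => ℕ) _),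
    Set.ncard_image_of_injective _ (Fin.snoc_left_injective (α := fun _ => ℕ) _),
    ncard_ndpfLastLE_succ]

theorem ncard_ndpfLastEq (n k : ℕ) (hk : k ≤ n + 1) :
    ((ndpfLastEq n k).ncard : ℤ) = (n + k).choose n - (n + k).choose (n + 1) := by
  match n, k with
  | n, 0 => simp [ndpfLastEq_zero]
  | n, k + 1 =>
    obtain rfl | hkn : k = n ∨ k < n := by omega
    · rw [ndpfLastEq_succ_self_eq_empty, Set.ncard_empty, show k + (k + 1) = 2 * k + 1 by ring,
        Nat.choose_symm_half, sub_self, Nat.cast_zero]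
    · obtain ⟨m, rfl⟩ : ∃ m, n = m + 1 := ⟨n - 1, by omega⟩
      rw [ncard_ndpfLastEq_succ_succ m k (by omega), Nat.cast_add,
        ncard_ndpfLastEq (m + 1) k (by omega), ncard_ndpfLastEq m (k + 1) (by omega),
        show m + 1 + (k + 1) = m + k + 1 + 1 by ring,
        show m + 1 + k = m + k + 1 by ring, show m + (k + 1) = m + k + 1 by ring,
        Nat.choose_succ_succ' (m + k + 1) m, Nat.choose_succ_succ' (m + k + 1) (m + 1)]
      push_cast
      ring
termination_by n + k
decreasing_by all_goals omega

theorem catalanTriangle_eq_choose_sub_choose (n k : ℕ) (hk : k ≤ n) :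
    (catalanTriangle n k : ℤ) = (n + k).choose n - (n + k).choose (n + 1) := by
  have hratio : (n + 1) * (n + k).choose (n + 1) = k * (n + k).choose n := by
    have := Nat.choose_succ_right_eq (n + k) n
    rw [show n + k - n = k by omega] at this
    linarith
  have hle : (n + k).choose (n + 1) ≤ (n + k).choose n := by nlinarith
  have hexact : (n - k + 1) * (n + k).choose n =
      (n + 1) * ((n + k).choose n - (n + k).choose (n + 1)) := by
    zify [hk, hle] at hratio ⊢
    linear_combination hratio
  rw [catalanTriangle, hexact, Nat.mul_div_cancel_left _ n.succ_pos, Nat.cast_sub hle]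

/-- The number of nondecreasing parking functions of length `n+1` whose maximum entry
equals `k+1` is `C_{n,k}`. -/
theorem card_ndpf_maxEntry (n k : ℕ) (hk : k ≤ n) :
    Nat.card {a : Fin (n + 1) → ℕ // IsNDParkingFunction (n + 1) a ∧
        (∀ i, a i ≤ k + 1) ∧ ∃ i, a i = k + 1}
      = catalanTriangle n k := by
  have hmax : {a : Fin (n + 1) → ℕ | IsNDParkingFunction (n + 1) a ∧
      (∀ i, a i ≤ k + 1) ∧ ∃ i, a i = k + 1} = ndpfLastEq n k := by
    ext a
    refine ⟨fun ⟨ha, hle, i, hi⟩ => ⟨ha, le_antisymm (hle _) (hi ▸ ha.1 (Fin.le_last i))⟩,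
      fun ⟨ha, hlast⟩ => ⟨ha, fun i => hlast ▸ ha.1 (Fin.le_last i), _, hlast⟩⟩
  rw [← Set.coe_ofPred, hmax, Nat.card_coe_set_eq]
  exact_mod_cast (ncard_ndpfLastEq n k (by omega)).trans
    (catalanTriangle_eq_choose_sub_choose n k hk).symm
end

section
/- For all integers 0 ≤ k ≤ n, the number of nondecreasing parking functions (a_1, …, a_{n+1}) of length n+1 having exactly k indices i with a_i ≠ i is C_{n,k}. -/
theorem Fin.monotone_cons_iff {α : Type*} [Preorder α] {n : ℕ} {x : α} {f : Fin n → α} :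
    Monotone (Fin.cons x f : Fin (n + 1) → α) ↔ (∀ i, x ≤ f i) ∧ Monotone f := by
  refine ⟨fun h => ⟨fun i => by simpa using h (Fin.zero_le i.succ),
    fun i j hij => by simpa using h (Fin.succ_le_succ_iff.2 hij)⟩,
    fun ⟨hx, hf⟩ i j hij => ?_⟩
  cases i using Fin.cases with
  | zero => cases j using Fin.cases with
    | zero => exact le_rfl
    | succ j => exact hx j
  | succ i => cases j using Fin.cases with
    | zero => exact absurd (Fin.le_zero_iff.1 hij) (Fin.succ_ne_zero i)
    | succ j => exact hf (Fin.succ_le_succ_iff.1 hij)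

/-- The recurrence `C_{d,k+1} = C_{d-1,k+1} + C_{d,k}` of Catalan's triangle, written for the
division-free quantity `d * C_{d-1,k} = (d - k) * binom(d + k - 1, k)`. -/
theorem catalan_triangle_recurrence {d k a b : ℕ} (hk : k < d)
    (ha : d * a = (d - (k + 1)) * (d + (k + 1) - 1).choose (k + 1))
    (hb : (d + 1) * b = (d + 1 - k) * (d + 1 + k - 1).choose k) :
    (d + 1) * (a + b) = (d + 1 - (k + 1)) * (d + 1 + (k + 1) - 1).choose (k + 1) := by
  rw [show d + (k + 1) - 1 = d + k by omega] at ha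
  rw [show d + 1 + k - 1 = d + k by omega] at hb
  rw [show d + 1 - (k + 1) = d - k by omega, show d + 1 + (k + 1) - 1 = d + k + 1 by omega]
  have h1 : (d + k).choose (k + 1) * (k + 1) = (d + k).choose k * d := by
    rw [Nat.choose_succ_right_eq, Nat.add_sub_cancel]
  have h2 : (d + k + 1).choose (k + 1) * (k + 1) = (d + k + 1) * (d + k).choose k :=
    (Nat.add_one_mul_choose_eq _ _).symm
  refine Nat.eq_of_mul_eq_mul_left (Nat.mul_pos (by omega : 0 < d) k.succ_pos) ?_
  have hk1 : k + 1 ≤ d := hk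
  zify [hk1, hk.le, (by omega : k ≤ d + 1)] at ha hb h1 h2 ⊢
  linear_combination (d + 1 : ℤ) * (k + 1) * ha + d * (k + 1) * hb +
    ((d : ℤ) + 1) * (d - (k + 1)) * h1 - d * (d - k) * h2

namespace NDParkingFunction

def IsWithSlack (c : ℕ) {m : ℕ} (b : Fin m → ℕ) : Prop :=
  Monotone b ∧ (∀ i, 1 ≤ b i) ∧ ∀ i : Fin m, b i ≤ (i : ℕ) + 1 + c

def unluckyCount (c : ℕ) {m : ℕ} (b : Fin m → ℕ) : ℕ :=
  (Finset.univ.filter fun i => b i ≠ (i : ℕ) + 1 + c).card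

def withUnlucky (m c k : ℕ) : Set (Fin m → ℕ) :=
  {b | IsWithSlack c b ∧ unluckyCount c b = k}

variable {m c k : ℕ}

theorem isWithSlack_cons_one {b : Fin m → ℕ} :
    IsWithSlack c (Fin.cons 1 b : Fin (m + 1) → ℕ) ↔ IsWithSlack (c + 1) b := by
  simp only [IsWithSlack, Fin.monotone_cons_iff, Fin.forall_fin_succ, Fin.cons_zero,
    Fin.cons_succ, Fin.val_zero, Fin.val_succ]
  constructor
  · rintro ⟨⟨-, hb⟩, ⟨-, hpos⟩, -, hle⟩
    exact ⟨hb, hpos, fun i => by linarith [hle i]⟩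
  · rintro ⟨hb, hpos, hle⟩
    exact ⟨⟨hpos, hb⟩, ⟨le_rfl, hpos⟩, by omega, fun i => by linarith [hle i]⟩

theorem unluckyCount_cons (x : ℕ) (b : Fin m → ℕ) :
    unluckyCount c (Fin.cons x b : Fin (m + 1) → ℕ)
      = (if x = 1 + c then 0 else 1) + unluckyCount (c + 1) b := by
  simp only [unluckyCount, Finset.card_filter, Fin.sum_univ_succ, Fin.cons_zero, Fin.cons_succ,
    Fin.val_zero, Fin.val_succ]
  congr 1
  · simp [ne_eq, ite_not]
  · refine Finset.sum_congr rfl fun i _ => ?_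
    simp only [show (i : ℕ) + 1 + 1 + c = i + 1 + (c + 1) by ring]

theorem isWithSlack_add_one {b : Fin (m + 1) → ℕ} :
    IsWithSlack (c + 1) (b + 1) ∧ b 0 ≠ 0 ↔ IsWithSlack c b := by
  simp only [IsWithSlack, Pi.add_apply, Pi.one_apply]
  constructor
  · rintro ⟨⟨hb, -, hle⟩, h0⟩
    have hb' : Monotone b := fun i j hij => by simpa using hb hij
    exact ⟨hb', fun i => by have := hb' (Fin.zero_le i); omega,
      fun i => by have := hle i; omega⟩
  · rintro ⟨hb, hpos, hle⟩
    exact ⟨⟨fun i j hij => by simpa using hb hij, fun i => by omega,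
      fun i => by have := hle i; omega⟩, by have := hpos 0; omega⟩

theorem unluckyCount_add_one (b : Fin m → ℕ) :
    unluckyCount (c + 1) (b + 1) = unluckyCount c b := by
  simp only [unluckyCount, Pi.add_apply, Pi.one_apply]
  congr 1
  ext i
  simp only [Finset.mem_filter, Finset.mem_univ, true_and]
  omega

theorem finite_withUnlucky : (withUnlucky m c k).Finite :=
  (Set.Finite.pi (t := fun i : Fin m => Set.Iic ((i : ℕ) + 1 + c))
    fun _ => Set.finite_Iic _).subset fun _ hb i _ => hb.1.2.2 i

theorem withUnlucky_zero : withUnlucky m c 0 = {fun i : Fin m => (i : ℕ) + 1 + c} := by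
  ext b
  simp only [withUnlucky, IsWithSlack, unluckyCount, Set.mem_ofPred_eq, Set.mem_singleton_iff,
    Finset.card_eq_zero, Finset.filter_eq_empty_iff, Finset.mem_univ, true_implies, not_not,
    funext_iff]
  refine ⟨fun h => h.2,
    fun h => ⟨⟨fun i j hij => ?_, fun i => ?_, fun i => (@h i).le⟩, h⟩⟩
  · rw [h, h]
    simpa using hij
  · rw [h]
    omega

theorem withUnlucky_eq_empty (h : m < k) : withUnlucky m c k = ∅ :=
  Set.eq_empty_of_forall_notMem fun _ hb => h.not_ge <| hb.2 ▸
    (Finset.card_filter_le _ _).trans_eq (Finset.card_fin m)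

theorem mem_range_cons_one {b : Fin (m + 1) → ℕ} (h : b 0 = 1) :
    b ∈ Set.range (Fin.cons (α := fun _ => ℕ) 1 : (Fin m → ℕ) → Fin (m + 1) → ℕ) :=
  ⟨Fin.tail b, funext fun i => by cases i using Fin.cases <;> simp [h, Fin.tail]⟩

theorem cons_one_preimage_withUnlucky_zero :
    Fin.cons (α := fun _ => ℕ) 1 ⁻¹' withUnlucky (m + 1) 0 k = withUnlucky m 1 k := by
  ext b
  simp only [Set.mem_preimage, withUnlucky, Set.mem_ofPred_eq, isWithSlack_cons_one,
    unluckyCount_cons, ↓reduceIte, zero_add]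

theorem cons_one_preimage_withUnlucky_succ :
    Fin.cons (α := fun _ => ℕ) 1 ⁻¹' (withUnlucky (m + 1) (c + 1) (k + 1) ∩ {b | b 0 = 1})
      = withUnlucky m (c + 2) k := by
  ext b
  simp only [Set.mem_preimage, Set.mem_inter_iff, withUnlucky, Set.mem_ofPred_eq,
    isWithSlack_cons_one, unluckyCount_cons, Fin.cons_zero, and_true]
  rw [if_neg (by omega)]
  exact and_congr_right fun _ => by rw [add_comm]; exact Nat.add_right_cancel_iff

theorem add_one_preimage_withUnlucky :
    (fun b : Fin (m + 1) → ℕ => b + 1) ⁻¹' (withUnlucky (m + 1) (c + 1) k \ {b | b 0 = 1})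
      = withUnlucky (m + 1) c k := by
  ext b
  simp only [Set.mem_preimage, Set.mem_sdiff, withUnlucky, Set.mem_ofPred_eq,
    unluckyCount_add_one, Pi.add_apply, Pi.one_apply, Nat.add_eq_right]
  rw [← isWithSlack_add_one (c := c) (b := b)]
  tauto

theorem ncard_withUnlucky_succ_zero :
    (withUnlucky (m + 1) 0 k).ncard = (withUnlucky m 1 k).ncard := by
  rw [← cons_one_preimage_withUnlucky_zero,
    Set.ncard_preimage_of_injective_subset_range (Fin.cons_right_injective 1)]
  intro b hb
  exact mem_range_cons_one (le_antisymm (hb.1.2.2 0) (hb.1.2.1 0))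

theorem ncard_withUnlucky_succ_succ_succ :
    (withUnlucky (m + 1) (c + 1) (k + 1)).ncard
      = (withUnlucky (m + 1) c (k + 1)).ncard + (withUnlucky m (c + 2) k).ncard := by
  rw [← Set.ncard_inter_add_ncard_sdiff_eq_ncard _ {b | b 0 = 1} finite_withUnlucky, add_comm,
    ← add_one_preimage_withUnlucky (m := m) (c := c) (k := k + 1),
    ← cons_one_preimage_withUnlucky_succ (m := m) (c := c) (k := k),
    Set.ncard_preimage_of_injective_subset_range (add_left_injective 1),
    Set.ncard_preimage_of_injective_subset_range (Fin.cons_right_injective 1)]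
  · rintro b ⟨-, hb0⟩
    exact mem_range_cons_one hb0
  · rintro b ⟨hb, -⟩
    refine ⟨b - 1, funext fun i => ?_⟩
    have := hb.1.2.1 i
    simp only [Pi.add_apply, Pi.sub_apply, Pi.one_apply]
    omega

theorem mul_ncard_withUnlucky (hk : k ≤ m) :
    (m + c) * (withUnlucky m c k).ncard = (m + c - k) * (m + c + k - 1).choose k := by
  induction m generalizing c k with
  | zero =>
    obtain rfl : k = 0 := by omega
    simp [withUnlucky_zero]
  | succ m ih =>
    induction c generalizing k with
    | zero =>
      rw [ncard_withUnlucky_succ_zero]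
      rcases hk.lt_or_eq with hk | rfl
      · simpa [Nat.add_right_comm m 1] using ih (c := 1) (Nat.lt_succ_iff.1 hk)
      · simp [withUnlucky_eq_empty (Nat.lt_succ_self m)]
    | succ c ihc =>
      cases k with
      | zero => simp [withUnlucky_zero]
      | succ k =>
        have hA := ihc hk
        have hB := ih (c := c + 2) (Nat.succ_le_succ_iff.1 hk)
        rw [show m + (c + 2) = m + 1 + c + 1 by omega] at hB
        rw [ncard_withUnlucky_succ_succ_succ, ← Nat.add_assoc]
        exact catalan_triangle_recurrence (by omega) hA hB

theorem ncard_withUnlucky_eq_catalanTriangle {n : ℕ} (hk : k ≤ n) :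
    (withUnlucky (n + 1) 0 k).ncard = catalanTriangle n k := by
  have h := mul_ncard_withUnlucky (c := 0) (Nat.le_succ_of_le hk)
  rw [Nat.add_zero, show n + 1 - k = n - k + 1 by omega, show n + 1 + k - 1 = n + k by omega] at h
  rw [catalanTriangle, Nat.choose_symm_add, ← h, Nat.mul_comm, Nat.mul_div_cancel _ n.succ_pos]

end NDParkingFunction

/-- The number of nondecreasing parking functions of length `n+1` with exactly `k` indices
`i` such that `a_i ≠ i` (1-based) is `C_{n,k}`. -/
theorem card_ndpf_unlucky (n k : ℕ) (hk : k ≤ n) :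
    Nat.card {a : Fin (n + 1) → ℕ // IsNDParkingFunction (n + 1) a ∧
        (Finset.univ.filter fun i : Fin (n + 1) => a i ≠ (i : ℕ) + 1).card = k}
      = catalanTriangle n k :=
  -- definitional: `Nat.card` of a set is its `ncard`, and `i + 1 + 0` reduces to `i + 1`
  NDParkingFunction.ncard_withUnlucky_eq_catalanTriangle hk
end

section
/- For all integers 0 ≤ k ≤ n, the number of leaf-marked binary trees with n+1 unmarked vertices and k marked leaves equals B_{n,k}. Equivalently, Σ_T binom(L(T) − 1, k) = B_{n,k}, the sum being over all binary trees T with exactly n+k+1 vertices, where L(T) is the number of leaves of T (every nonempty binary tree has at least one leaf, and the marked leaves range over all leaves except one distinguished one, the rightmost leaf). -/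
/-- Binary trees: every vertex has an ordered pair of (possibly absent) children. -/
inductive BinTree : Type
  | nil : BinTree
  | node : BinTree → BinTree → BinTree
  deriving DecidableEq

/-- The number of vertices of a binary tree. -/
def BinTree.size : BinTree → ℕ
  | .nil => 0
  | .node l r => l.size + r.size + 1

/-- The positions (paths from the root, `false` = go left, `true` = go right) of the leaves of
a binary tree, listed from left to right; the rightmost leaf is the last entry. -/
def BinTree.leafPos : BinTree → List (List Bool)
  | .nil => []
  | .node .nil .nil => [([] : List Bool)]
  | .node l r => (l.leafPos.map (List.cons false)) ++ (r.leafPos.map (List.cons true))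



/-- `ℤ`-valued ballot numbers (entries of Catalan's triangle). -/
def Dz (n s : ℕ) : ℤ :=
  ((n + s).choose s : ℤ) - if s = 0 then 0 else ((n + s).choose (s - 1) : ℤ)

lemma Dz_zero (n : ℕ) : Dz n 0 = 1 := by simp [Dz]

lemma choose_mul_aux (m s : ℕ) : ((m + s + 1).choose (s+1) : ℤ) * (s + 1) =
    ((m + s + 1).choose s : ℤ) * (m + 1) := by
  have h := Nat.choose_succ_right_eq (m + s + 1) s
  have h2 : m + s + 1 - s = m + 1 := by omega
  rw [h2] at h
  exact_mod_cast congrArg (Nat.cast (R := ℤ)) h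

/-- key: `(n+1) * Dz n s = (n+1-s) * choose (n+s) s` in `ℤ`. -/
lemma succ_mul_Dz (n s : ℕ) : (n + 1 : ℤ) * Dz n s = ((n:ℤ) + 1 - s) * ((n + s).choose s : ℤ) := by
  rcases Nat.eq_zero_or_pos s with rfl | hs
  · simp [Dz]
  · obtain ⟨t, rfl⟩ := Nat.exists_eq_add_of_lt hs; simp only [Nat.zero_add]
    have h' : ((n + (t+1)).choose (t+1) : ℤ) * (t + 1) = ((n + (t+1)).choose t : ℤ) * (n + 1) := by
      have := choose_mul_aux n t
      have e : n + t + 1 = n + (t+1) := by omega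
      rwa [e] at this
    simp only [Dz, if_neg (Nat.succ_ne_zero t), Nat.add_sub_cancel]
    push_cast
    linear_combination h'

lemma choose_pred_le (n s : ℕ) (hs : 1 ≤ s) (hsn : s ≤ n) :
    (n + s).choose (s - 1) ≤ (n + s).choose s := by
  obtain ⟨t, rfl⟩ : ∃ t, s = t + 1 := ⟨s - 1, by omega⟩
  simp only [Nat.add_sub_cancel]
  exact Nat.choose_le_succ_of_lt_half_left (by omega)

/-- cast lemma: for `s ≤ n`, `catalanTriangle n s = Dz n s`. -/
lemma catalanTriangle_cast (n s : ℕ) (h : s ≤ n) : (catalanTriangle n s : ℤ) = Dz n s := by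
  rcases Nat.eq_zero_or_pos s with rfl | hs1
  · rw [Dz_zero, catalanTriangle]
    simp [Nat.choose_self, Nat.mul_div_cancel_left]
  have hle : (n + s).choose (s - 1) ≤ (n + s).choose s := choose_pred_le n s hs1 h
  set M : ℕ := (n + s).choose s - (n + s).choose (s - 1) with hM
  have hMz : (M : ℤ) = Dz n s := by
    rw [hM, Dz, if_neg (by omega : ¬ s = 0)]
    push_cast [hle]; ring
  have key : (n - s + 1) * (n + s).choose n = (n + 1) * M := by
    have : ((n - s + 1 : ℕ) : ℤ) * ((n + s).choose n : ℤ) = (n + 1 : ℤ) * (M : ℤ) := by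
      rw [hMz]
      have hsym : (n + s).choose n = (n + s).choose s := by
        rw [← Nat.choose_symm (by omega : n ≤ n + s)]; congr 1; omega
      rw [hsym]
      have := succ_mul_Dz n s
      have hns : ((n - s + 1 : ℕ) : ℤ) = (n : ℤ) + 1 - s := by omega
      rw [hns]; linarith [this]
    exact_mod_cast this
  rw [catalanTriangle, key, Nat.mul_div_cancel_left _ (by omega), hMz]

/-- Pascal recurrence for `Dz`. -/
lemma Dz_pascal (n s : ℕ) : Dz (n + 1) (s + 1) = Dz n (s + 1) + Dz (n + 1) s := by
  rcases Nat.eq_zero_or_pos s with rfl | hs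
  · simp only [Dz, if_neg one_ne_zero, if_pos rfl, Nat.sub_self, Nat.choose_one_right,
      Nat.choose_zero_right, Nat.add_zero]
    rw [show n + 1 + 1 = 2 + n from by omega, show n + 1 = 1 + n from by omega,
      Nat.choose_one_right, Nat.choose_one_right]
    push_cast; ring
  · obtain ⟨t, rfl⟩ := Nat.exists_eq_add_of_lt hs; simp only [Nat.zero_add]
    simp only [Dz, if_neg (Nat.succ_ne_zero _), Nat.add_sub_cancel]
    have e1 : n + 1 + (t + 1 + 1) = (n + (t+1+1)) + 1 := by omega
    have e2 : n + 1 + (t + 1) = (n + (t + 1)) + 1 := by omega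
    have e3 : n + (t+1+1) = (n + (t+1)) + 1 := by omega
    rw [e1, e2, e3]
    rw [Nat.choose_succ_succ ((n + (t+1)) + 1) (t+1), Nat.choose_succ_succ ((n+(t+1))+1) t,
      Nat.choose_succ_succ (n + (t+1)) (t+1), Nat.choose_succ_succ (n + (t+1)) t]
    push_cast; ring
lemma Dz_top (n : ℕ) : Dz n (n + 1) = 0 := by
  simp only [Dz, if_neg (Nat.succ_ne_zero n), Nat.add_sub_cancel]
  have : (n + (n+1)).choose (n+1) = (n + (n+1)).choose n := by
    rw [← Nat.choose_symm (by omega : n + 1 ≤ n + (n+1))]; congr 1; omega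
  rw [this]; ring

lemma Dz_diag (n : ℕ) : Dz n n = (catalan n : ℤ) := by
  have h1 : ((n+1 : ℕ) : ℤ) * Dz n n = ((n+1:ℕ) * catalan n : ℕ) := by
    rw [succ_mul_catalan_eq_centralBinom]
    have := succ_mul_Dz n n
    push_cast at this ⊢
    rw [this]
    have : Nat.centralBinom n = (n + n).choose n := by
      rw [Nat.centralBinom]; congr 1; omega
    rw [this]; push_cast; ring
  have : (n + 1 : ℤ) * Dz n n = (n+1 : ℤ) * (catalan n : ℤ) := by push_cast at h1 ⊢; linarith
  exact mul_left_cancel₀ (by positivity) this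

lemma borelTriangle_cast (n k : ℕ) :
    (borelTriangle n k : ℤ) = ∑ s ∈ Finset.Icc k n, (s.choose k : ℤ) * Dz n s := by
  rw [borelTriangle]
  push_cast
  refine Finset.sum_congr rfl fun s hs => ?_
  rw [catalanTriangle_cast n s (Finset.mem_Icc.mp hs).2]

lemma borel_to_range (n k : ℕ) :
    (borelTriangle n k : ℤ) = ∑ s ∈ Finset.range (n + 2), (s.choose k : ℤ) * Dz n s := by
  rw [borelTriangle_cast]
  refine Finset.sum_subset (fun s hs => ?_) (fun s hs hns => ?_)
  · simp only [Finset.mem_Icc] at hs; simp only [Finset.mem_range]; omega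
  · simp only [Finset.mem_Icc, not_and_or, not_le, Finset.mem_range] at hns hs
    rcases hns with h | h
    · rw [Nat.choose_eq_zero_of_lt h]; push_cast; ring
    · have : s = n + 1 := by omega
      rw [this, Dz_top]; ring

/-- The master identity. -/
lemma master (n k : ℕ) :
    borelTriangle n (k+1) + borelTriangle (n+1) k = (n+2).choose (k+1) * catalan (n+1) := by
  have key : ∑ s ∈ Finset.range (n + 2),
      ((s.choose (k+1) : ℤ) * Dz n s + (s.choose k : ℤ) * Dz (n+1) s)
      = ((n+2).choose (k+1) : ℤ) * Dz (n+1) (n+1) := by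
    have step : ∀ i, (( (i+1).choose (k+1) : ℤ) * Dz n (i+1) + ((i+1).choose k : ℤ) * Dz (n+1) (i+1))
        = ((i+2).choose (k+1) : ℤ) * Dz (n+1) (i+1) - ((i+1).choose (k+1) : ℤ) * Dz (n+1) i := by
      intro i
      have hp := Dz_pascal n i
      have hc : ((i+2).choose (k+1) : ℤ) = ((i+1).choose (k+1) : ℤ) + ((i+1).choose k : ℤ) := by
        rw [Nat.choose_succ_succ (i+1) k]; push_cast; ring
      rw [hc]; linear_combination -((i+1).choose (k+1) : ℤ) * hp
    rw [Finset.sum_range_succ']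
    have : ∑ i ∈ Finset.range (n+1),
        (((i+1).choose (k+1) : ℤ) * Dz n (i+1) + ((i+1).choose k : ℤ) * Dz (n+1) (i+1))
        = ∑ i ∈ Finset.range (n+1),
          ((fun j => ((j+1).choose (k+1) : ℤ) * Dz (n+1) j) (i+1)
            - (fun j => ((j+1).choose (k+1) : ℤ) * Dz (n+1) j) i) := by
      refine Finset.sum_congr rfl fun i _ => ?_
      simpa using step i
    rw [this, Finset.sum_range_sub (fun j => ((j+1).choose (k+1) : ℤ) * Dz (n+1) j) (n+1)]
    simp [Dz_zero, Nat.choose_succ_succ]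
  have cast2 : (borelTriangle (n+1) k : ℤ) = ∑ s ∈ Finset.range (n + 2), (s.choose k : ℤ) * Dz (n+1) s := by
    rw [borelTriangle_cast]
    refine Finset.sum_subset (fun s hs => ?_) (fun s hs hns => ?_)
    · simp only [Finset.mem_Icc] at hs; simp only [Finset.mem_range]; omega
    · simp only [Finset.mem_Icc, not_and_or, not_le, Finset.mem_range] at hns hs
      rcases hns with h | h
      · rw [Nat.choose_eq_zero_of_lt h]; push_cast; ring
      · omega
  have : (borelTriangle n (k+1) : ℤ) + (borelTriangle (n+1) k : ℤ)
      = ((n+2).choose (k+1) : ℤ) * (catalan (n+1) : ℤ) := by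
    rw [borel_to_range, cast2, ← Finset.sum_add_distrib, key, Dz_diag]
  exact_mod_cast this

/-- Row sums of Catalan's triangle. -/
lemma borel_zero (n : ℕ) : borelTriangle n 0 = catalan (n + 1) := by
  have : (borelTriangle n 0 : ℤ) = (catalan (n+1) : ℤ) := by
    rw [borel_to_range]
    have step : ∀ i, ((i+1).choose 0 : ℤ) * Dz n (i+1)
        = (fun j => Dz (n+1) j) (i+1) - (fun j => Dz (n+1) j) i := by
      intro i; have := Dz_pascal n i; simp only [Nat.choose_zero_right]; push_cast; linarith
    rw [Finset.sum_range_succ']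
    rw [Finset.sum_congr rfl (fun i _ => step i), Finset.sum_range_sub (fun j => Dz (n+1) j) (n+1)]
    have := Dz_pascal n n  -- Dz (n+1) (n+1) = Dz n (n+1) + Dz (n+1) n
    rw [← Dz_diag]
    have h0 := Dz_top n
    simp only [Dz_zero, Nat.choose_zero_right, Nat.cast_one, one_mul]
    linarith
  exact_mod_cast this

namespace BinTree

def slots : BinTree → List (List Bool)
  | .nil => [[]]
  | .node l r => (l.slots.map (List.cons false)) ++ (r.slots.map (List.cons true))

lemma leafPos_node {l r : BinTree} (h : ¬(l = nil ∧ r = nil)) :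
    (node l r).leafPos = (l.leafPos.map (List.cons false)) ++ (r.leafPos.map (List.cons true)) := by
  cases l <;> cases r <;> first | rfl | exact absurd ⟨rfl, rfl⟩ h

lemma length_slots (t : BinTree) : t.slots.length = t.size + 1 := by
  induction t with
  | nil => simp [slots, size]
  | node l r ihl ihr => simp [slots, size, ihl, ihr]; omega

lemma cons_inj (b : Bool) : Function.Injective (List.cons b) := by
  intro x y h; simpa using h

lemma nodup_slots (t : BinTree) : t.slots.Nodup := by
  induction t with
  | nil => simp [slots]
  | node l r ihl ihr =>
    refine List.Nodup.append (ihl.map (cons_inj false)) (ihr.map (cons_inj true)) ?_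
    intro a ha hb
    simp only [List.mem_map] at ha hb
    obtain ⟨x, -, rfl⟩ := ha; obtain ⟨y, -, h⟩ := hb
    exact absurd (congrArg List.head? h) (by simp)

lemma nodup_leafPos (t : BinTree) : t.leafPos.Nodup := by
  induction t with
  | nil => simp [leafPos]
  | node l r ihl ihr =>
    by_cases h : l = nil ∧ r = nil
    · obtain ⟨rfl, rfl⟩ := h; simp [leafPos]
    · rw [leafPos_node h]
      refine List.Nodup.append (ihl.map (cons_inj false)) (ihr.map (cons_inj true)) ?_
      intro a ha hb
      simp only [List.mem_map] at ha hb
      obtain ⟨x, -, rfl⟩ := ha; obtain ⟨y, -, h⟩ := hb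
      exact absurd (congrArg List.head? h) (by simp)

lemma leafPos_ne_nil {t : BinTree} (h : t ≠ nil) : t.leafPos ≠ [] := by
  induction t with
  | nil => exact absurd rfl h
  | node l r ihl ihr =>
    by_cases hc : l = nil ∧ r = nil
    · obtain ⟨rfl, rfl⟩ := hc; simp [leafPos]
    · rw [leafPos_node hc]
      rcases Decidable.em (l = nil) with rfl | hl
      · have hr : r ≠ nil := fun hr => hc ⟨rfl, hr⟩
        simp [leafPos, ihr hr]
      · simp [ihl hl]


noncomputable def preF (b : Bool) (S : Finset (List Bool)) : Finset (List Bool) :=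
  S.preimage (List.cons b) (fun x _ y _ h => by simpa using h)

@[simp] lemma mem_preF {b : Bool} {S : Finset (List Bool)} {q : List Bool} :
    q ∈ preF b S ↔ b :: q ∈ S := Finset.mem_preimage

@[simp] lemma preF_empty (b : Bool) : preF b ∅ = ∅ := by
  ext q; simp

@[simp] lemma preF_singleton_nil (b : Bool) : preF b {([] : List Bool)} = ∅ := by
  ext q; simp

lemma preF_insert_nil (b : Bool) (S : Finset (List Bool)) :
    preF b (insert [] S) = preF b S := by
  ext q; simp

lemma preF_insert_cons (b b' : Bool) (q' : List Bool) (S : Finset (List Bool)) :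
    preF b (insert (b' :: q') S) =
      if b' = b then insert q' (preF b S) else preF b S := by
  rcases Decidable.em (b' = b) with rfl | h
  · ext q; simp
  · rw [if_neg h]; ext q
    simp only [mem_preF, Finset.mem_insert, List.cons.injEq]
    constructor
    · rintro (⟨rfl, rfl⟩ | hq)
      · exact absurd rfl h
      · exact hq
    · exact Or.inr

lemma card_split (S : Finset (List Bool)) :
    S.card = (if [] ∈ S then 1 else 0) + (preF false S).card + (preF true S).card := by
  induction S using Finset.induction_on with
  | empty => simp
  | @insert a S ha ih =>
    rw [Finset.card_insert_of_notMem ha]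
    cases a with
    | nil =>
      rw [preF_insert_nil, preF_insert_nil, if_pos (Finset.mem_insert_self _ _),
        if_neg ha] at *
      omega
    | cons b q =>
      have hq : q ∉ preF b S := fun hq => ha (by simpa using hq)
      have e : ((if [] ∈ insert (b :: q) S then 1 else 0) : ℕ) = if [] ∈ S then 1 else 0 := by
        by_cases h0 : ([] : List Bool) ∈ S <;> simp [h0]
      cases b
      · rw [preF_insert_cons, preF_insert_cons, if_pos rfl,
          if_neg (by decide : ¬((false : Bool) = true)),
          Finset.card_insert_of_notMem hq, e]
        omega
      · rw [preF_insert_cons, preF_insert_cons, if_pos rfl,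
          if_neg (by decide : ¬((true : Bool) = false)),
          Finset.card_insert_of_notMem hq, e]
        omega

noncomputable def graft : BinTree → Finset (List Bool) → BinTree
  | .nil, S => if [] ∈ S then node nil nil else nil
  | .node l r, S => node (graft l (preF false S)) (graft r (preF true S))

noncomputable def prune : BinTree → Finset (List Bool) → BinTree
  | .nil, _ => nil
  | .node l r, S =>
      if [] ∈ S then nil else node (prune l (preF false S)) (prune r (preF true S))

lemma graft_nil (S : Finset (List Bool)) :
    graft nil S = if [] ∈ S then node nil nil else nil := rfl
lemma graft_node (l r : BinTree) (S : Finset (List Bool)) :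
    graft (node l r) S = node (graft l (preF false S)) (graft r (preF true S)) := rfl
lemma prune_nil (S : Finset (List Bool)) : prune nil S = nil := rfl
lemma prune_node (l r : BinTree) (S : Finset (List Bool)) :
    prune (node l r) S =
      if [] ∈ S then nil else node (prune l (preF false S)) (prune r (preF true S)) := rfl

lemma sub_slots_nil {S : Finset (List Bool)} (h : ∀ q ∈ S, q ∈ slots nil) :
    S = ∅ ∨ S = {([] : List Bool)} := by
  have : S ⊆ {([] : List Bool)} := fun q hq => by
    have := h q hq; simp only [slots, List.mem_singleton] at this
    simp [this]
  exact Finset.subset_singleton_iff.mp this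

lemma sub_node_descend {S : Finset (List Bool)} {L R : List (List Bool)}
    (h : ∀ q ∈ S, q ∈ (L.map (List.cons false)) ++ (R.map (List.cons true))) :
    ([] ∉ S) ∧ (∀ q ∈ preF false S, q ∈ L) ∧ (∀ q ∈ preF true S, q ∈ R) := by
  refine ⟨fun hnil => ?_, fun q hq => ?_, fun q hq => ?_⟩
  · have := h [] hnil; simp at this
  · have := h _ (mem_preF.mp hq); simp at this; tauto
  · have := h _ (mem_preF.mp hq); simp at this; tauto

lemma size_graft (t : BinTree) (S : Finset (List Bool)) (h : ∀ q ∈ S, q ∈ t.slots) :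
    (graft t S).size = t.size + S.card := by
  induction t generalizing S with
  | nil =>
    rcases sub_slots_nil h with rfl | rfl
    · simp [graft, size]
    · simp [graft, size]
  | node l r ihl ihr =>
    obtain ⟨hnil, hL, hR⟩ := sub_node_descend (L := l.slots) (R := r.slots) h
    rw [graft_node, size, ihl _ hL, ihr _ hR, card_split S, if_neg hnil]
    simp [size]; omega

lemma mem_leafPos_graft {t : BinTree} {S : Finset (List Bool)} (h : ∀ q ∈ S, q ∈ t.slots) :
    ∀ q ∈ S, q ∈ (graft t S).leafPos := by
  induction t generalizing S with
  | nil =>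
    intro q hq
    rcases sub_slots_nil h with rfl | rfl
    · exact absurd hq (Finset.notMem_empty q)
    · have : q = [] := by simpa using hq
      subst this
      rw [graft_nil, if_pos (by simp)]
      simp [leafPos]
  | node l r ihl ihr =>
    intro q hq
    obtain ⟨hnil, hL, hR⟩ := sub_node_descend (L := l.slots) (R := r.slots) h
    rw [graft_node]
    obtain ⟨b, q', rfl⟩ : ∃ b q', q = b :: q' := by
      cases q with
      | nil => exact absurd hq hnil
      | cons b q' => exact ⟨b, q', rfl⟩
    cases b
    · have hm : q' ∈ (graft l (preF false S)).leafPos := ihl hL q' (by simpa using hq)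
      have hne : ¬(graft l (preF false S) = nil ∧ graft r (preF true S) = nil) := by
        rintro ⟨h1, h2⟩; rw [h1] at hm; simp [leafPos] at hm
      rw [leafPos_node hne]
      simp only [List.mem_append, List.mem_map]
      exact Or.inl ⟨q', hm, rfl⟩
    · have hm : q' ∈ (graft r (preF true S)).leafPos := ihr hR q' (by simpa using hq)
      have hne : ¬(graft l (preF false S) = nil ∧ graft r (preF true S) = nil) := by
        rintro ⟨h1, h2⟩; rw [h2] at hm; simp [leafPos] at hm
      rw [leafPos_node hne]
      simp only [List.mem_append, List.mem_map]
      exact Or.inr ⟨q', hm, rfl⟩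

lemma prune_graft {t : BinTree} {S : Finset (List Bool)} (h : ∀ q ∈ S, q ∈ t.slots) :
    prune (graft t S) S = t := by
  induction t generalizing S with
  | nil =>
    rcases sub_slots_nil h with rfl | rfl
    · rw [graft_nil, if_neg (by simp), prune_nil]
    · rw [graft_nil, if_pos (by simp), prune_node, if_pos (by simp)]
  | node l r ihl ihr =>
    obtain ⟨hnil, hL, hR⟩ := sub_node_descend (L := l.slots) (R := r.slots) h
    rw [graft_node, prune_node, if_neg hnil, ihl hL, ihr hR]

lemma sub_leafPos_nilnil {S : Finset (List Bool)}
    (h : ∀ q ∈ S, q ∈ (node nil nil).leafPos) : S = ∅ ∨ S = {([] : List Bool)} := by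
  have : S ⊆ {([] : List Bool)} := fun q hq => by
    have := h q hq; simp only [leafPos, List.mem_singleton] at this
    simp [this]
  exact Finset.subset_singleton_iff.mp this

lemma size_prune {t : BinTree} {S : Finset (List Bool)} (h : ∀ q ∈ S, q ∈ t.leafPos) :
    (prune t S).size + S.card = t.size := by
  induction t generalizing S with
  | nil =>
    have : S = ∅ := Finset.eq_empty_of_forall_notMem (fun q hq => by
      have := h q hq; simp [leafPos] at this)
    subst this; simp [prune_nil, size]
  | node l r ihl ihr =>
    by_cases hc : l = nil ∧ r = nil
    · obtain ⟨rfl, rfl⟩ := hc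
      rcases sub_leafPos_nilnil h with rfl | rfl
      · rw [prune_node, if_neg (by simp)]; simp [prune_nil, size]
      · rw [prune_node, if_pos (by simp)]; simp [size]
    · rw [leafPos_node hc] at h
      obtain ⟨hnil, hL, hR⟩ := sub_node_descend h
      rw [prune_node, if_neg hnil, size, card_split S, if_neg hnil]
      have h1 := ihl hL
      have h2 := ihr hR
      simp [size]; omega

lemma mem_slots_prune {t : BinTree} {S : Finset (List Bool)} (h : ∀ q ∈ S, q ∈ t.leafPos) :
    ∀ q ∈ S, q ∈ (prune t S).slots := by
  induction t generalizing S with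
  | nil =>
    intro q hq; have := h q hq; simp [leafPos] at this
  | node l r ihl ihr =>
    intro q hq
    by_cases hc : l = nil ∧ r = nil
    · obtain ⟨rfl, rfl⟩ := hc
      rcases sub_leafPos_nilnil h with rfl | rfl
      · exact absurd hq (Finset.notMem_empty q)
      · have : q = [] := by simpa using hq
        subst this
        rw [prune_node, if_pos (by simp)]
        simp [slots]
    · rw [leafPos_node hc] at h
      obtain ⟨hnil, hL, hR⟩ := sub_node_descend h
      rw [prune_node, if_neg hnil]
      obtain ⟨b, q', rfl⟩ : ∃ b q', q = b :: q' := by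
        cases q with
        | nil => exact absurd hq hnil
        | cons b q' => exact ⟨b, q', rfl⟩
      rw [slots]
      cases b
      · simp only [List.mem_append, List.mem_map]
        exact Or.inl ⟨q', ihl hL q' (by simpa using hq), rfl⟩
      · simp only [List.mem_append, List.mem_map]
        exact Or.inr ⟨q', ihr hR q' (by simpa using hq), rfl⟩

lemma graft_prune {t : BinTree} {S : Finset (List Bool)} (h : ∀ q ∈ S, q ∈ t.leafPos) :
    graft (prune t S) S = t := by
  induction t generalizing S with
  | nil =>
    have : S = ∅ := Finset.eq_empty_of_forall_notMem (fun q hq => by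
      have := h q hq; simp [leafPos] at this)
    subst this; rw [prune_nil, graft_nil, if_neg (by simp)]
  | node l r ihl ihr =>
    by_cases hc : l = nil ∧ r = nil
    · obtain ⟨rfl, rfl⟩ := hc
      rcases sub_leafPos_nilnil h with rfl | rfl
      · simp [prune_node, prune_nil, graft_node, graft_nil]
      · rw [prune_node, if_pos (Finset.mem_singleton_self _), graft_nil,
          if_pos (Finset.mem_singleton_self _)]
    · rw [leafPos_node hc] at h
      obtain ⟨hnil, hL, hR⟩ := sub_node_descend h
      rw [prune_node, if_neg hnil, graft_node, ihl hL, ihr hR]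

end BinTree

namespace BinTree

def toTree : BinTree → Tree Unit
  | .nil => .nil
  | .node l r => .node () (toTree l) (toTree r)

def ofTree : Tree Unit → BinTree
  | .nil => .nil
  | .node _ l r => .node (ofTree l) (ofTree r)

lemma ofTree_toTree : ∀ t, ofTree (toTree t) = t
  | .nil => rfl
  | .node l r => by rw [toTree, ofTree, ofTree_toTree l, ofTree_toTree r]

lemma toTree_ofTree : ∀ t, toTree (ofTree t) = t
  | .nil => rfl
  | .node _ l r => by rw [ofTree, toTree, toTree_ofTree l, toTree_ofTree r]

lemma size_ofTree : ∀ t : Tree Unit, (ofTree t).size = t.numNodes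
  | .nil => rfl
  | .node _ l r => by
      rw [ofTree, size, size_ofTree l, size_ofTree r, Tree.numNodes]; rfl

def treesOfSize (m : ℕ) : Finset BinTree := (Tree.treesOfNumNodesEq m).image ofTree

lemma mem_treesOfSize {m : ℕ} {t : BinTree} : t ∈ treesOfSize m ↔ t.size = m := by
  simp only [treesOfSize, Finset.mem_image, BinaryTree.mem_treesOfNumNodesEq]
  constructor
  · rintro ⟨u, hu, rfl⟩; rw [size_ofTree]; exact hu
  · intro h
    refine ⟨toTree t, ?_, ofTree_toTree t⟩
    have hs : (ofTree (toTree t)).size = BinaryTree.numNodes (toTree t) := size_ofTree (toTree t)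
    rw [← h, ← hs, ofTree_toTree]

lemma card_treesOfSize (m : ℕ) : (treesOfSize m).card = catalan m := by
  rw [treesOfSize, Finset.card_image_of_injective _
    (Function.LeftInverse.injective toTree_ofTree),
    BinaryTree.treesOfNumNodesEq_card_eq_catalan]

/-- pairs (tree of size m, k-subset of f t). -/
noncomputable def pairs (m k : ℕ) (f : BinTree → List (List Bool)) :
    Finset (BinTree × Finset (List Bool)) :=
  (treesOfSize m).biUnion fun t =>
    (Finset.powersetCard k (f t).toFinset).image fun S => (t, S)

lemma mem_pairs {m k : ℕ} {f : BinTree → List (List Bool)} {p : BinTree × Finset (List Bool)} :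
    p ∈ pairs m k f ↔ p.1.size = m ∧ p.2.card = k ∧ ∀ q ∈ p.2, q ∈ f p.1 := by
  obtain ⟨t, S⟩ := p
  simp only [pairs, Finset.mem_biUnion, Finset.mem_image, Finset.mem_powersetCard,
    mem_treesOfSize, Prod.mk.injEq]
  constructor
  · rintro ⟨t', ht', S', ⟨hsub, hcard⟩, rfl, rfl⟩
    exact ⟨ht', hcard, fun q hq => by simpa using hsub hq⟩
  · rintro ⟨h1, h2, h3⟩
    exact ⟨t, h1, S, ⟨fun q hq => List.mem_toFinset.mpr (h3 q hq), h2⟩, rfl, rfl⟩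

lemma card_pairs (m k : ℕ) (f : BinTree → List (List Bool)) :
    (pairs m k f).card = ∑ t ∈ treesOfSize m, ((f t).toFinset.card).choose k := by
  rw [pairs, Finset.card_biUnion]
  · refine Finset.sum_congr rfl fun t _ => ?_
    rw [Finset.card_image_of_injective _ (fun a b h => by simpa using h),
      Finset.card_powersetCard]
  · intro x hx y hy hxy
    simp only [Finset.disjoint_left, Finset.mem_image]
    rintro p ⟨S, -, rfl⟩ ⟨S', -, h⟩
    exact hxy (by simpa using (congrArg Prod.fst h).symm)

lemma card_pairs_slots (v k : ℕ) :
    (pairs v k slots).card = catalan v * (v + 1).choose k := by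
  rw [card_pairs]
  rw [Finset.sum_congr rfl fun t ht => ?_, Finset.sum_const, card_treesOfSize, smul_eq_mul]
  rw [List.toFinset_card_of_nodup (nodup_slots t), length_slots,
    mem_treesOfSize.mp ht]

lemma card_pairs_leafPos (v k : ℕ) :
    (pairs (v + k) k leafPos).card = (pairs v k slots).card := by
  refine (Finset.card_bij' (fun p _ => (graft p.1 p.2, p.2)) (fun p _ => (prune p.1 p.2, p.2))
    ?_ ?_ ?_ ?_).symm
  · rintro ⟨t, S⟩ hp
    dsimp only
    obtain ⟨h1, h2, h3⟩ := mem_pairs.mp hp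
    simp only at h1 h2 h3
    refine mem_pairs.mpr ⟨?_, h2, mem_leafPos_graft h3⟩
    have := size_graft t S h3
    simp only at this ⊢
    omega
  · rintro ⟨t, S⟩ hp
    dsimp only
    obtain ⟨h1, h2, h3⟩ := mem_pairs.mp hp
    simp only at h1 h2 h3
    refine mem_pairs.mpr ⟨?_, h2, mem_slots_prune h3⟩
    have := size_prune (t := t) (S := S) h3
    simp only at this ⊢
    omega
  · rintro ⟨t, S⟩ hp
    dsimp only
    obtain ⟨h1, h2, h3⟩ := mem_pairs.mp hp
    simp only at h1 h2 h3
    simp only [Prod.mk.injEq]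
    exact ⟨prune_graft h3, trivial⟩
  · rintro ⟨t, S⟩ hp
    dsimp only
    obtain ⟨h1, h2, h3⟩ := mem_pairs.mp hp
    simp only at h1 h2 h3
    simp only [Prod.mk.injEq]
    exact ⟨graft_prune h3, trivial⟩

lemma card_pairs_pascal (m k : ℕ) (hm : 1 ≤ m) :
    (pairs m (k + 1) leafPos).card
      = (pairs m (k + 1) (fun t => t.leafPos.dropLast)).card
        + (pairs m k (fun t => t.leafPos.dropLast)).card := by
  rw [card_pairs, card_pairs, card_pairs, ← Finset.sum_add_distrib]
  refine Finset.sum_congr rfl fun t ht => ?_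
  have hne : t ≠ nil := by
    intro h; rw [mem_treesOfSize, h] at ht; simp [size] at ht; omega
  have hnodup := nodup_leafPos t
  have hL : (t.leafPos.toFinset).card = t.leafPos.length :=
    List.toFinset_card_of_nodup hnodup
  have hD : (t.leafPos.dropLast.toFinset).card = t.leafPos.length - 1 := by
    rw [List.toFinset_card_of_nodup ((List.dropLast_sublist _).nodup hnodup),
      List.length_dropLast]
  have hlen : 1 ≤ t.leafPos.length :=
    List.length_pos_iff.mpr (leafPos_ne_nil hne)
  rw [hL, hD]
  obtain ⟨L, hLe⟩ : ∃ L, t.leafPos.length = L + 1 := ⟨_, (Nat.succ_pred_eq_of_pos hlen).symm⟩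
  rw [hLe]
  simp only [Nat.add_sub_cancel]
  rw [Nat.choose_succ_succ]
  simp only [Nat.succ_eq_add_one]
  omega

end BinTree


open BinTree in
lemma N_eq_borel : ∀ k n, k ≤ n →
    (BinTree.pairs (n + k + 1) k (fun t => t.leafPos.dropLast)).card = borelTriangle n k := by
  intro k
  induction k with
  | zero =>
    intro n _
    rw [BinTree.card_pairs, borel_zero]
    simp only [Nat.choose_zero_right]
    rw [Finset.sum_const, BinTree.card_treesOfSize, smul_eq_mul, mul_one]
  | succ k ih =>
    intro n hk
    have hpas := BinTree.card_pairs_pascal (n + (k+1) + 1) k (by omega)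
    have hG : (BinTree.pairs (n + (k+1) + 1) (k+1) BinTree.leafPos).card
        = (n+2).choose (k+1) * catalan (n+1) := by
      have h := BinTree.card_pairs_leafPos (n+1) (k+1)
      rw [show (n+1) + (k+1) = n + (k+1) + 1 from by omega] at h
      rw [h, BinTree.card_pairs_slots, mul_comm]
    have hN : (BinTree.pairs (n + (k+1) + 1) k (fun t => t.leafPos.dropLast)).card
        = borelTriangle (n+1) k := by
      have h := ih (n+1) (by omega)
      rw [show (n+1) + k + 1 = n + (k+1) + 1 from by omega] at h
      exact h
    have hm := master n k
    omega

/-- The number of leaf-marked binary trees with `n+1` unmarked vertices and `k` marked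
leaves (i.e. pairs `(T, S)` where `T` is a binary tree with `n+k+1` vertices and `S` is a
set of `k` leaves of `T` not containing the rightmost leaf) equals `B_{n,k}`. -/
theorem card_leafMarkedBinTrees (n k : ℕ) (hk : k ≤ n) :
    Nat.card {p : BinTree × Finset (List Bool) // p.1.size = n + k + 1 ∧
        p.2.card = k ∧ ∀ q ∈ p.2, q ∈ p.1.leafPos.dropLast}
      = borelTriangle n k := by
  have e : {p : BinTree × Finset (List Bool) // p.1.size = n + k + 1 ∧
        p.2.card = k ∧ ∀ q ∈ p.2, q ∈ p.1.leafPos.dropLast} ≃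
      {p : BinTree × Finset (List Bool) //
        p ∈ BinTree.pairs (n + k + 1) k (fun t => t.leafPos.dropLast)} :=
    Equiv.subtypeEquivRight (fun p => by rw [BinTree.mem_pairs])
  rw [Nat.card_congr e, Nat.card_eq_fintype_card, Fintype.card_coe]
  exact N_eq_borel k n hk
end
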